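/- arXiv:1906.07053 — 9 statements merged into one kernel-verified Lean document; each statement's English description precedes it below -/
import Mathlib

section
/- Let X be a spectral space with specialization order ≤, and let Y ⊆ X be a subset such that every nonempty finite subset of Y has a supremum in X. Then every nonempty subset Z of Y has a supremum in X, and this supremum belongs to the closure, in the constructible (patch) topology of X, of the set of suprema of nonempty finite subsets of Y. -/
/-!
The finite suprema form a net, indexed by the finite nonempty subsets of `Z` directed by
inclusion, which is increasing for specialization. Quasi-compactness shows that every compact set
meeting the closures of all its points meets their intersection `C`; with compact opens closed
under intersection this makes `C` nonempty and irreducible, so by sobriety `C = closure {b}`, which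
says exactly that `b` is the supremum of `Z`. The net converges to `b` in the patch topology: it
lies in every open set containing `b`, and if it kept entering a compact open `U` with `b ∉ U`, it
would lie in `U` throughout, so `U` would meet `C` and hence contain `b`.
-/

open Set TopologicalSpace

/-- A topology `t` on `X` makes `X` a spectral space: quasi-compact, `T0`, sober, with a basis
of quasi-compact open sets closed under finite (binary) intersections. -/
def IsSpectral (X : Type*) (t : TopologicalSpace X) : Prop :=
  @CompactSpace X t ∧ @T0Space X t ∧ @QuasiSober X t ∧
    ∃ B : Set (Set X),
      (∀ s ∈ B, @IsCompact X t s ∧ @IsOpen X t s) ∧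
      (∀ s ∈ B, ∀ u ∈ B, s ∩ u ∈ B) ∧
      @TopologicalSpace.IsTopologicalBasis X t B

/-- The specialization order of a topology: `x ≤ y` iff `y ∈ closure {x}`. -/
def specLE {X : Type*} (t : TopologicalSpace X) (x y : X) : Prop := y ∈ @closure X t {x}

/-- `b` is the supremum of `S` with respect to the specialization order of `t`. -/
def IsSupSpec {X : Type*} (t : TopologicalSpace X) (S : Set X) (b : X) : Prop :=
  (∀ x ∈ S, specLE t x b) ∧ ∀ c, (∀ x ∈ S, specLE t x c) → specLE t b c

/-- `b` is the infimum of `S` with respect to the specialization order of `t`. -/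
def IsInfSpec {X : Type*} (t : TopologicalSpace X) (S : Set X) (b : X) : Prop :=
  (∀ x ∈ S, specLE t b x) ∧ ∀ c, (∀ x ∈ S, specLE t c x) → specLE t c b

/-- The constructible (patch) topology associated to a topology `t`: the coarsest topology in
which all quasi-compact `t`-open sets are clopen. -/
def patchOf {X : Type*} (t : TopologicalSpace X) : TopologicalSpace X :=
  TopologicalSpace.generateFrom
    {s : Set X | (@IsCompact X t s ∧ @IsOpen X t s) ∨ (@IsCompact X t sᶜ ∧ @IsOpen X t sᶜ)}

/-- Closure with respect to the constructible (patch) topology of `t`. -/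
def patchClosure {X : Type*} (t : TopologicalSpace X) (Y : Set X) : Set X :=
  @closure X (patchOf t) Y

open Filter Topology

section DirectedSpecialization

variable {X ι : Type*} [TopologicalSpace X] [Preorder ι] [IsDirectedOrder ι] [Nonempty ι]
  {s : ι → X}

theorem IsCompact.inter_iInter_closure_singleton_nonempty (hs : ∀ ⦃i j⦄, i ≤ j → s i ⤳ s j)
    {K : Set X} (hK : IsCompact K) (hKs : ∀ i, (K ∩ closure {s i}).Nonempty) :
    (K ∩ ⋂ i, closure {s i}).Nonempty := by
  refine hK.inter_iInter_nonempty _ (fun _ ↦ isClosed_closure) fun u ↦ ?_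
  obtain ⟨j, hj⟩ := u.exists_le
  obtain ⟨p, hpK, hpj⟩ := hKs j
  exact ⟨p, hpK, mem_iInter₂.2 fun i hi ↦ specializes_iff_closure_subset.1 (hs (hj i hi)) hpj⟩

theorem isIrreducible_iInter_closure_singleton [CompactSpace X] [QuasiSeparatedSpace X]
    [PrespectralSpace X] (hs : ∀ ⦃i j⦄, i ≤ j → s i ⤳ s j) :
    IsIrreducible (⋂ i, closure {s i}) := by
  have hne := isCompact_univ.inter_iInter_closure_singleton_nonempty hs
    fun i ↦ ⟨s i, trivial, subset_closure rfl⟩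
  refine ⟨by rwa [univ_inter] at hne, ?_⟩
  rintro U V hU hV ⟨x, hxC, hxU⟩ ⟨y, hyC, hyV⟩
  obtain ⟨U', ⟨hU'o, hU'c⟩, hxU', hU'U⟩ :=
    PrespectralSpace.isTopologicalBasis.exists_subset_of_mem_open hxU hU
  obtain ⟨V', ⟨hV'o, hV'c⟩, hyV', hV'V⟩ :=
    PrespectralSpace.isTopologicalBasis.exists_subset_of_mem_open hyV hV
  have hmeet : ∀ i, (U' ∩ V' ∩ closure {s i}).Nonempty := fun i ↦ by
    obtain ⟨p, hp, hpU', hpV'⟩ := isIrreducible_singleton.closure.2 U' V' hU'o hV'o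
      ⟨x, mem_iInter.1 hxC i, hxU'⟩ ⟨y, mem_iInter.1 hyC i, hyV'⟩
    exact ⟨p, ⟨hpU', hpV'⟩, hp⟩
  obtain ⟨p, ⟨hpU', hpV'⟩, hpC⟩ :=
    (hU'c.inter_of_isOpen hV'c hU'o hV'o).inter_iInter_closure_singleton_nonempty hs hmeet
  exact ⟨p, hpC, hU'U hpU', hV'V hpV'⟩

theorem exists_isGenericPoint_iInter_closure_singleton [CompactSpace X] [QuasiSober X]
    [QuasiSeparatedSpace X] [PrespectralSpace X] (hs : ∀ ⦃i j⦄, i ≤ j → s i ⤳ s j) :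
    ∃ b, IsGenericPoint b (⋂ i, closure {s i}) :=
  QuasiSober.sober (isIrreducible_iInter_closure_singleton hs)
    (isClosed_iInter fun _ ↦ isClosed_closure)

theorem IsGenericPoint.tendsto_constructibleTopology (hs : ∀ ⦃i j⦄, i ≤ j → s i ⤳ s j) {b : X}
    (hb : IsGenericPoint b (⋂ i, closure {s i})) :
    Tendsto s atTop (@nhds X (constructibleTopology X) b) := by
  rw [tendsto_nhds_generateFrom_iff]
  rintro u (⟨hu, -⟩ | ⟨hu, huc⟩) hbu
  · exact Eventually.of_forall fun i ↦
      (specializes_iff_mem_closure.2 (mem_iInter.1 hb.mem i)).mem_open hu hbu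
  · by_contra hev
    -- `uᶜ` is open, so once the net visits it, it has been there all along
    have hsu : ∀ i, s i ∈ uᶜ := fun i ↦ by
      obtain ⟨j, hij, hj⟩ := frequently_atTop.1 (not_eventually.1 hev) i
      exact (hs hij).mem_open hu.isOpen_compl hj
    obtain ⟨p, hpu, hpC⟩ := huc.inter_iInter_closure_singleton_nonempty hs
      fun i ↦ ⟨s i, hsu i, subset_closure rfl⟩
    exact (hb.specializes hpC).mem_open hu.isOpen_compl hpu hbu

end DirectedSpecialization

theorem IsGenericPoint.specializes_iff_forall {X ι : Type*} [TopologicalSpace X] {s : ι → X}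
    {b c : X} (hb : IsGenericPoint b (⋂ i, closure {s i})) : b ⤳ c ↔ ∀ i, s i ⤳ c := by
  simp only [hb.specializes_iff_mem, mem_iInter, specializes_iff_mem_closure]

theorem specLE_iff_specializes {X : Type*} [t : TopologicalSpace X] {x y : X} :
    specLE t x y ↔ x ⤳ y :=
  specializes_iff_mem_closure.symm

theorem IsSpectral.spectralSpace {X : Type*} [t : TopologicalSpace X] (h : IsSpectral X t) :
    SpectralSpace X := by
  obtain ⟨_, _, _, B, hBco, hBinter, hB⟩ := h
  have hB' : IsTopologicalBasis (range ((↑) : B → Set X)) := by rwa [Subtype.range_coe]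
  exact
    { toQuasiSeparatedSpace :=
        .of_isTopologicalBasis hB' fun U V ↦ (hBco _ (hBinter _ U.2 _ V.2)).1
      toPrespectralSpace := .of_isTopologicalBasis hB fun U hU ↦ (hBco U hU).1 }

theorem patchOf_eq_constructibleTopology {X : Type*} (t : TopologicalSpace X) :
    patchOf t = constructibleTopology X := by
  simp only [patchOf, constructibleTopology, constructibleTopologySubbasis, isOpen_compl_iff]
  congr 1
  ext s
  simp only [mem_ofPred_eq, mem_union]
  tauto

theorem stmt0 {X : Type*} [t : TopologicalSpace X] (hX : IsSpectral X t) (Y : Set X)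
    (hf : ∀ F : Set X, F ⊆ Y → F.Finite → F.Nonempty → ∃ b, IsSupSpec t F b) :
    ∀ Z : Set X, Z ⊆ Y → Z.Nonempty →
      ∃ b, IsSupSpec t Z b ∧
        b ∈ patchClosure t
          {x | ∃ F : Set X, F ⊆ Y ∧ F.Finite ∧ F.Nonempty ∧ IsSupSpec t F x} := by
  have := hX.spectralSpace
  rintro Z hZY ⟨z₀, hz₀⟩
  let ι := {F : Set X // F ⊆ Z ∧ F.Finite ∧ F.Nonempty}
  let single (z : X) (hz : z ∈ Z) : ι :=
    ⟨{z}, singleton_subset_iff.2 hz, finite_singleton z, singleton_nonempty z⟩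
  have : Nonempty ι := ⟨single z₀ hz₀⟩
  have : IsDirectedOrder ι := ⟨fun F G ↦ ⟨⟨F.1 ∪ G.1, union_subset F.2.1 G.2.1,
    F.2.2.1.union G.2.2.1, F.2.2.2.mono subset_union_left⟩, subset_union_left, subset_union_right⟩⟩
  choose s hsup using fun F : ι ↦ hf F.1 (F.2.1.trans hZY) F.2.2.1 F.2.2.2
  have hmono : ∀ ⦃F G : ι⦄, F ≤ G → s F ⤳ s G := fun F G hFG ↦
    specLE_iff_specializes.1 <| (hsup F).2 _ fun x hx ↦ (hsup G).1 x (hFG hx)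
  obtain ⟨b, hb⟩ := exists_isGenericPoint_iInter_closure_singleton hmono
  refine ⟨b, ⟨fun z hz ↦ ?_, fun c hc ↦ ?_⟩, ?_⟩
  · have hzs := specLE_iff_specializes.1 ((hsup (single z hz)).1 z rfl)
    exact specLE_iff_specializes.2 <| hzs.trans <| hb.specializes_iff_forall.1 specializes_rfl _
  · exact specLE_iff_specializes.2 <| hb.specializes_iff_forall.2 fun F ↦
      specLE_iff_specializes.1 <| (hsup F).2 c fun x hx ↦ hc x (F.2.1 hx)
  · rw [patchClosure, patchOf_eq_constructibleTopology]
    exact @mem_closure_of_tendsto X (constructibleTopology X) _ _ _ _ _ _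
      (hb.tendsto_constructibleTopology hmono)
      (Eventually.of_forall fun F ↦ ⟨F.1, F.2.1.trans hZY, F.2.2.1, F.2.2.2, hsup F⟩)
end

section
/- Let X be a spectral space that is locally with maximum. Then every quasi-compact open subset of X has finitely many maximal elements with respect to the specialization order. -/
/-!
Cover `U` by open subsets of `U` that have a maximum. By compactness finitely many of them
suffice, so every point of `U` lies below one of finitely many maxima, and a maximal element
of `U` must be one of them.
-/

open Set TopologicalSpace

/-- A space is locally with maximum if every point has a neighborhood basis of open sets each
of which has a maximum with respect to the specialization order. -/
def LocallyWithMaximum (X : Type*) (t : TopologicalSpace X) : Prop :=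
  ∀ x : X, ∀ V : Set X, @IsOpen X t V → x ∈ V →
    ∃ U : Set X, @IsOpen X t U ∧ x ∈ U ∧ U ⊆ V ∧ ∃ u₀ ∈ U, ∀ y ∈ U, specLE t y u₀


theorem LocallyWithMaximum.exists_finite_dominating {X : Type*} [t : TopologicalSpace X]
    (hloc : LocallyWithMaximum X t) {U : Set X} (hU : IsOpen U) (hc : IsCompact U) :
    ∃ F : Set X, F.Finite ∧ F ⊆ U ∧ ∀ x ∈ U, ∃ u ∈ F, specLE t x u := by
  choose W hWopen hWmem hWsub u₀ hu₀mem hu₀max using fun x : U => hloc x U hU x.2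
  obtain ⟨s, hs⟩ := hc.elim_finite_subcover (fun x : U => W x) hWopen
    fun x hx => mem_iUnion.2 ⟨⟨x, hx⟩, hWmem ⟨x, hx⟩⟩
  refine ⟨u₀ '' s, s.finite_toSet.image u₀, image_subset_iff.2 fun i _ => hWsub i (hu₀mem i),
    fun x hx => ?_⟩
  obtain ⟨i, hi, hxi⟩ := mem_iUnion₂.1 (hs hx)
  exact ⟨u₀ i, mem_image_of_mem u₀ hi, hu₀max i x hxi⟩

theorem setOf_maximal_subset_of_dominating {X : Type*} {r : X → X → Prop} {U F : Set X}
    (hFU : F ⊆ U) (hF : ∀ x ∈ U, ∃ u ∈ F, r x u) :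
    {m | m ∈ U ∧ ∀ y ∈ U, r m y → y = m} ⊆ F := by
  rintro m ⟨hmU, hmax⟩
  obtain ⟨u, huF, hmu⟩ := hF m hmU
  exact hmax u (hFU huF) hmu ▸ huF

theorem stmt4_general {X : Type*} [t : TopologicalSpace X]
    (hloc : LocallyWithMaximum X t)
    (U : Set X) (hU : IsOpen U) (hc : IsCompact U) :
    {m | m ∈ U ∧ ∀ y ∈ U, specLE t m y → y = m}.Finite := by
  obtain ⟨F, hFfin, hFU, hF⟩ := hloc.exists_finite_dominating hU hc
  exact hFfin.subset (setOf_maximal_subset_of_dominating hFU hF)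

theorem stmt4 {X : Type*} [t : TopologicalSpace X] (hX : IsSpectral X t)
    (hloc : LocallyWithMaximum X t)
    (U : Set X) (hU : IsOpen U) (hc : IsCompact U) :
    {m | m ∈ U ∧ ∀ y ∈ U, specLE t m y → y = m}.Finite :=
  stmt4_general (t := t) hloc U hU hc
end

section
/- Let L be an algebraic lattice of sets in a set S, viewed as a spectral space under the Zariski topology (the topology whose basic quasi-compact open sets are the finite unions of up-sets of finitely generated elements). Then the set L_fin of finitely generated elements of L is dense in L with respect to the constructible topology. -/
open Set TopologicalSpace

/-- An algebraic lattice of sets in `S`. -/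
def IsAlgebraicLattice {S : Type*} (L : Set (Set S)) : Prop :=
  (∀ D : Set (Set S), D ⊆ L → ⋂₀ D ∈ L) ∧
  (∀ D : Set (Set S), D ⊆ L → D.Nonempty → DirectedOn (· ⊆ ·) D → ⋃₀ D ∈ L)

/-- The Zariski topology on an algebraic lattice of sets: subbasic open sets are the up-sets
of finitely generated elements, i.e. the sets `{A ∈ L | F ⊆ A}` for finite `F ⊆ S`. -/
def zarTopL {S : Type*} (L : Set (Set S)) : TopologicalSpace ↥L :=
  TopologicalSpace.generateFrom
    {U : Set ↥L | ∃ F : Set S, F.Finite ∧ U = {A : ↥L | F ⊆ (A : Set S)}}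

/-- `A` is a finitely generated element of `L`: the closure of a finite subset of `S`,
where the closure associated to `L` is intersection of all members of `L` containing it. -/
def FinGenL {S : Type*} (L : Set (Set S)) (A : Set S) : Prop :=
  ∃ F : Set S, F.Finite ∧ A = ⋂₀ {I ∈ L | F ⊆ I}

/-!
Every patch neighbourhood of `A ∈ L` contains some `O \ V ∋ A` with `O`, `V` Zariski open. Being
open, `O` contains a basic open `{B | F ⊆ B} ∋ A` with `F` finite, hence the closure of `F`, a
finitely generated element contained in `A`. That element is not in `V`, since Zariski open sets
are upward closed and `A ∉ V`.
-/

open Topology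

theorem exists_isOpen_diff_subset_of_isOpen_patchOf {X : Type*} (t : TopologicalSpace X)
    {U : Set X} (hU : IsOpen[patchOf t] U) {x : X} (hx : x ∈ U) :
    ∃ O V : Set X, IsOpen[t] O ∧ IsOpen[t] V ∧ x ∈ O \ V ∧ O \ V ⊆ U := by
  induction hU generalizing x with
  | basic s hs =>
    rcases hs with ⟨-, hs⟩ | ⟨-, hs⟩
    · exact ⟨s, ∅, hs, isOpen_empty, by simpa, by simp⟩
    · exact ⟨univ, sᶜ, isOpen_univ, hs, by simpa, by simp⟩
  | univ => exact ⟨univ, ∅, isOpen_univ, isOpen_empty, by simp, subset_univ _⟩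
  | inter s u _ _ ihs ihu =>
    obtain ⟨O₁, V₁, hO₁, hV₁, hx₁, h₁⟩ := ihs hx.1
    obtain ⟨O₂, V₂, hO₂, hV₂, hx₂, h₂⟩ := ihu hx.2
    refine ⟨O₁ ∩ O₂, V₁ ∪ V₂, hO₁.inter hO₂, hV₁.union hV₂, ?_, ?_⟩
    · exact ⟨⟨hx₁.1, hx₂.1⟩, fun h => h.elim hx₁.2 hx₂.2⟩
    · rintro y ⟨⟨hy₁, hy₂⟩, hyV⟩
      exact ⟨h₁ ⟨hy₁, fun h => hyV (.inl h)⟩, h₂ ⟨hy₂, fun h => hyV (.inr h)⟩⟩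
  | sUnion K _ ih =>
    obtain ⟨s, hs, hxs⟩ := hx
    obtain ⟨O, V, hO, hV, hxOV, hOV⟩ := ih s hs hxs
    exact ⟨O, V, hO, hV, hxOV, hOV.trans (subset_sUnion_of_mem hs)⟩

section zarTopL

variable {S : Type*} (L : Set (Set S))

theorem isTopologicalBasis_zarTopL :
    @IsTopologicalBasis ↥L (zarTopL L)
      {U : Set ↥L | ∃ F : Set S, F.Finite ∧ U = {A : ↥L | F ⊆ (A : Set S)}} :=
  @isTopologicalBasis_of_subbasis_of_finiteInter _ (zarTopL L) _ rfl
    { univ_mem := ⟨∅, finite_empty, by simp⟩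
      inter_mem := by
        rintro _ ⟨F, hF, rfl⟩ _ ⟨G, hG, rfl⟩
        exact ⟨F ∪ G, hF.union hG, by ext; simp [union_subset_iff]⟩ }

theorem isUpperSet_of_isOpen_zarTopL {U : Set ↥L} (hU : IsOpen[zarTopL L] U) : IsUpperSet U := by
  have : Topology.upperSet ↥L ≤ zarTopL L := le_generateFrom <| by
    rintro _ ⟨F, -, rfl⟩ A B hAB hA
    exact Subset.trans hA hAB
  exact this U hU

theorem exists_finGenL_le_of_isOpen_zarTopL (hL : ∀ D ⊆ L, ⋂₀ D ∈ L) {O : Set ↥L}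
    (hO : IsOpen[zarTopL L] O) {A : ↥L} (hA : A ∈ O) :
    ∃ B ∈ O, FinGenL L (B : Set S) ∧ B ≤ A := by
  let := zarTopL L
  obtain ⟨_, ⟨F, hF, rfl⟩, hFA, hFO⟩ :=
    (isTopologicalBasis_zarTopL L).exists_subset_of_mem_open hA hO
  let B : ↥L := ⟨⋂₀ {I ∈ L | F ⊆ I}, hL _ fun _ hI => hI.1⟩
  exact ⟨B, hFO (subset_sInter fun _ hI => hI.2), ⟨F, hF, rfl⟩, sInter_subset_of_mem ⟨A.2, hFA⟩⟩

end zarTopL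

theorem stmt8 {S : Type*} (L : Set (Set S)) (hL : IsAlgebraicLattice L) :
    @Dense ↥L (patchOf (zarTopL L)) {A : ↥L | FinGenL L (A : Set S)} := by
  let := patchOf (zarTopL L)
  refine dense_iff_inter_open.2 fun U hU ⟨A, hA⟩ => ?_
  obtain ⟨O, V, hO, hV, ⟨hAO, hAV⟩, hOV⟩ :=
    exists_isOpen_diff_subset_of_isOpen_patchOf (zarTopL L) hU hA
  obtain ⟨B, hBO, hB, hBA⟩ := exists_finGenL_le_of_isOpen_zarTopL L hL.1 hO hAO
  exact ⟨B, hOV ⟨hBO, fun hBV => hAV (isUpperSet_of_isOpen_zarTopL L hV hBA hBV)⟩, hB⟩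
end

section
/- Let L be an algebraic lattice of sets in S, a spectral space under the Zariski topology. The set L_fin of finitely generated elements of L is a spectral space in the subspace (Zariski) topology if and only if L_fin = L. -/
open Set TopologicalSpace

/-!
In `L_fin` with the Zariski topology, `A ⤳ B` iff `B ⊆ A`, and the set of generalizations of
`F^c` is the basic open `{F}↑`. So every point has a smallest open neighbourhood; these are
quasi-compact and form a basis closed under intersections, and `L_fin` is always quasi-compact
and `T₀`. Only sobriety depends on `L_fin = L`. For `A ∈ L` the finitely generated elements
below `A` form an irreducible closed set, and a generic point of it is an element of `L_fin`
with the same finitely generated elements below it as `A`, i.e. `A` itself. Conversely, when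
`L_fin = L`, an irreducible closed set is directed, and its union is a generic point.
-/

theorem specializes_generateFrom_iff {X : Type*} {g : Set (Set X)} {x y : X} :
    @Specializes X (generateFrom g) x y ↔ ∀ s ∈ g, y ∈ s → x ∈ s := by
  let _ := generateFrom g
  simp only [specializes_iff_pure, nhds_generateFrom, le_iInf_iff, Filter.le_principal_iff,
    Filter.mem_pure, mem_ofPred_eq, and_imp]
  exact ⟨fun h s hs hy => h s hy hs, fun h s hy hs => h s hs hy⟩

section Specialization

variable {X : Type*} [TopologicalSpace X]

theorem isIrreducible_of_forall_exists_specializes {Z : Set X} (hne : Z.Nonempty)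
    (h : ∀ x ∈ Z, ∀ y ∈ Z, ∃ z ∈ Z, z ⤳ x ∧ z ⤳ y) : IsIrreducible Z := by
  refine ⟨hne, fun u v hu hv ⟨x, hxZ, hxu⟩ ⟨y, hyZ, hyv⟩ => ?_⟩
  obtain ⟨z, hzZ, hzx, hzy⟩ := h x hxZ y hyZ
  exact ⟨z, hzZ, hzx.mem_open hu hxu, hzy.mem_open hv hyv⟩

theorem IsPreirreducible.exists_specializes_of_isOpen_nhdsKer {Z : Set X} (hZ : IsPreirreducible Z) {x y : X}
    (hx : x ∈ Z) (hy : y ∈ Z) (hxo : IsOpen (nhdsKer {x})) (hyo : IsOpen (nhdsKer {y})) :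
    ∃ z ∈ Z, z ⤳ x ∧ z ⤳ y := by
  obtain ⟨z, hzZ, hzx, hzy⟩ :=
    hZ _ _ hxo hyo ⟨x, hx, subset_nhdsKer rfl⟩ ⟨y, hy, subset_nhdsKer rfl⟩
  exact ⟨z, hzZ, mem_nhdsKer_singleton.1 hzx, mem_nhdsKer_singleton.1 hzy⟩

theorem isTopologicalBasis_nhdsKer_singleton (h : ∀ x : X, IsOpen (nhdsKer {x})) :
    IsTopologicalBasis (range fun x : X => nhdsKer {x}) :=
  isTopologicalBasis_of_isOpen_of_nhds (by rintro _ ⟨x, rfl⟩; exact h x)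
    fun x _ hx hu => ⟨_, mem_range_self x, subset_nhdsKer rfl,
      nhdsKer_minimal (singleton_subset_iff.2 hx) hu⟩

theorem compactSpace_of_forall_specializes (x : X) (h : ∀ y, y ⤳ x) : CompactSpace X :=
  ⟨isCompact_singleton.nhdsKer.of_isClosed_subset isClosed_univ
    fun y _ => mem_nhdsKer_singleton.2 (h y)⟩

end Specialization

section AlgebraicLattice

variable {S : Type*} {L : Set (Set S)}

variable (L) in
def latticeSpan (F : Set S) : Set S := ⋂₀ {I ∈ L | F ⊆ I}

theorem subset_latticeSpan {F : Set S} : F ⊆ latticeSpan L F :=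
  fun _ ha _ hI => hI.2 ha

theorem latticeSpan_subset_iff {F A : Set S} (hA : A ∈ L) :
    latticeSpan L F ⊆ A ↔ F ⊆ A :=
  ⟨subset_latticeSpan.trans, fun h => sInter_subset_of_mem ⟨hA, h⟩⟩

theorem IsAlgebraicLattice.latticeSpan_mem (hL : IsAlgebraicLattice L) (F : Set S) :
    latticeSpan L F ∈ L :=
  hL.1 _ fun _ hI => hI.1

attribute [local instance] zarTopL

theorem isOpen_setOf_finite_subset {F : Set S} (hF : F.Finite) :
    IsOpen {A : L | F ⊆ (A : Set S)} :=
  isOpen_generateFrom_of_mem ⟨F, hF, rfl⟩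

theorem zarTopL_specializes_iff {A B : L} : A ⤳ B ↔ (B : Set S) ⊆ A := by
  refine specializes_generateFrom_iff.trans ⟨?_, ?_⟩
  · intro h a ha
    exact singleton_subset_iff.1 <|
      h _ ⟨{a}, finite_singleton a, rfl⟩ (singleton_subset_iff.2 ha)
  · rintro h _ ⟨F, -, rfl⟩ hF
    exact hF.trans h

theorem isClosed_setOf_subset (A : Set S) : IsClosed {B : L | (B : Set S) ⊆ A} := by
  have hcompl : {B : L | (B : Set S) ⊆ A}ᶜ = ⋃ a ∈ Aᶜ, {B : L | {a} ⊆ (B : Set S)} := by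
    ext B
    simp only [mem_compl_iff, mem_ofPred_eq, not_subset, mem_iUnion, singleton_subset_iff,
      exists_prop, and_comm]
  rw [← isOpen_compl_iff, hcompl]
  exact isOpen_biUnion fun a _ => isOpen_setOf_finite_subset (finite_singleton a)

variable (L) in
abbrev finGenSet : Set L := {A | FinGenL L A}

theorem exists_eq_latticeSpan (x : finGenSet L) :
    ∃ F : Set S, F.Finite ∧ ((x : L) : Set S) = latticeSpan L F :=
  x.2

theorem finGenSet_specializes_iff {x y : finGenSet L} :
    x ⤳ y ↔ ((y : L) : Set S) ⊆ (x : L) :=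
  (subtype_specializes_iff x y).trans zarTopL_specializes_iff

theorem isOpen_nhdsKer_finGenSet (x : finGenSet L) : IsOpen (nhdsKer {x}) := by
  obtain ⟨F, hF, hx⟩ := exists_eq_latticeSpan x
  have hker : nhdsKer {x} = Subtype.val ⁻¹' {A : L | F ⊆ (A : Set S)} := by
    ext y
    rw [mem_nhdsKer_singleton, finGenSet_specializes_iff, hx]
    exact latticeSpan_subset_iff y.1.2
  rw [hker]
  exact (isOpen_setOf_finite_subset hF).preimage continuous_subtype_val

theorem finGenSet_t0Space : T0Space (finGenSet L) :=
  (t0Space_iff_inseparable _).2 fun _ _ h =>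
    have ⟨hxy, hyx⟩ := inseparable_iff_specializes_and.1 h
    Subtype.ext <| Subtype.ext <|
      subset_antisymm (finGenSet_specializes_iff.1 hyx) (finGenSet_specializes_iff.1 hxy)

namespace IsAlgebraicLattice

variable (hL : IsAlgebraicLattice L)
include hL

def finGenOf {F : Set S} (hF : F.Finite) : finGenSet L :=
  ⟨⟨latticeSpan L F, hL.latticeSpan_mem F⟩, F, hF, rfl⟩

theorem exists_finGenSet_sup (x y : finGenSet L) :
    ∃ z : finGenSet L, ∀ A : L,
      ((x : L) : Set S) ⊆ A ∧ ((y : L) : Set S) ⊆ A ↔ ((z : L) : Set S) ⊆ A := by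
  obtain ⟨F, hF, hx⟩ := exists_eq_latticeSpan x
  obtain ⟨G, hG, hy⟩ := exists_eq_latticeSpan y
  refine ⟨hL.finGenOf (hF.union hG), fun A => ?_⟩
  simp only [hx, hy, finGenOf, latticeSpan_subset_iff A.2, union_subset_iff]

theorem compactSpace_finGenSet : CompactSpace (finGenSet L) :=
  compactSpace_of_forall_specializes (hL.finGenOf finite_empty) fun y =>
    finGenSet_specializes_iff.2 <| (latticeSpan_subset_iff y.1.2).2 (empty_subset _)

theorem nhdsKer_inter_nhdsKer_mem_range (x y : finGenSet L) :
    nhdsKer {x} ∩ nhdsKer {y} ∈ range fun z : finGenSet L => nhdsKer {z} := by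
  obtain ⟨z, hz⟩ := hL.exists_finGenSet_sup x y
  refine ⟨z, ext fun w => ?_⟩
  simp only [mem_inter_iff, mem_nhdsKer_singleton, finGenSet_specializes_iff, hz w.1]

theorem isIrreducible_setOf_subset (A : L) :
    IsIrreducible {x : finGenSet L | ((x : L) : Set S) ⊆ A} := by
  refine isIrreducible_of_forall_exists_specializes
    ⟨hL.finGenOf finite_empty, (latticeSpan_subset_iff A.2).2 (empty_subset _)⟩
    fun x hx y hy => ?_
  obtain ⟨z, hz⟩ := hL.exists_finGenSet_sup x y
  obtain ⟨hxz, hyz⟩ := (hz z.1).2 subset_rfl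
  exact ⟨z, (hz A).1 ⟨hx, hy⟩, finGenSet_specializes_iff.2 hxz, finGenSet_specializes_iff.2 hyz⟩

theorem finGenL_of_quasiSober [QuasiSober (finGenSet L)] (A : L) : FinGenL L A := by
  obtain ⟨g, hg⟩ := QuasiSober.sober (hL.isIrreducible_setOf_subset A)
    ((isClosed_setOf_subset (A : Set S)).preimage continuous_subtype_val)
  have hspec : ∀ y : finGenSet L, ((y : L) : Set S) ⊆ (g : L) ↔ ((y : L) : Set S) ⊆ A :=
    fun y => finGenSet_specializes_iff.symm.trans (isGenericPoint_iff_specializes.1 hg y)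
  have hgA : ((g : L) : Set S) = A := by
    refine subset_antisymm ((hspec g).1 subset_rfl) fun a ha => ?_
    have hcl := (hspec (hL.finGenOf (finite_singleton a))).2
      ((latticeSpan_subset_iff A.2).2 (singleton_subset_iff.2 ha))
    exact hcl (subset_latticeSpan rfl)
  rw [← hgA]
  exact g.2

theorem quasiSober_finGenSet (hall : ∀ A : L, FinGenL L A) : QuasiSober (finGenSet L) := by
  refine ⟨fun {Z} hZi hZc => ?_⟩
  set D : Set (Set S) := (fun x : finGenSet L => ((x : L) : Set S)) '' Z
  have hDL : D ⊆ L := by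
    rintro _ ⟨x, -, rfl⟩
    exact x.1.2
  have hne : D.Nonempty := hZi.1.image _
  have hdir : DirectedOn (· ⊆ ·) D := by
    rintro _ ⟨x, hx, rfl⟩ _ ⟨y, hy, rfl⟩
    obtain ⟨z, hz, hzx, hzy⟩ := hZi.2.exists_specializes_of_isOpen_nhdsKer hx hy
      (isOpen_nhdsKer_finGenSet x) (isOpen_nhdsKer_finGenSet y)
    exact ⟨_, mem_image_of_mem _ hz,
      finGenSet_specializes_iff.1 hzx, finGenSet_specializes_iff.1 hzy⟩
  have hDmem : ⋃₀ D ∈ L := hL.2 D hDL hne hdir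
  refine ⟨⟨⟨⋃₀ D, hDmem⟩, hall _⟩, isGenericPoint_iff_specializes.2 fun y => ?_⟩
  rw [finGenSet_specializes_iff]
  refine ⟨fun hy => ?_, fun hy => subset_sUnion_of_mem ⟨y, hy, rfl⟩⟩
  obtain ⟨F, hF, hyF⟩ := exists_eq_latticeSpan y
  obtain ⟨_, ⟨z, hz, rfl⟩, hFz⟩ := hdir.exists_mem_subset_of_finite_of_subset_sUnion hne hF
    ((hyF ▸ subset_latticeSpan).trans hy)
  have hzy : z ⤳ y := finGenSet_specializes_iff.2 (hyF ▸ (latticeSpan_subset_iff z.1.2).2 hFz)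
  exact hzy.mem_closed hZc hz

end IsAlgebraicLattice

end AlgebraicLattice

theorem stmt9 {S : Type*} (L : Set (Set S)) (hL : IsAlgebraicLattice L) :
    IsSpectral (↥{A : ↥L | FinGenL L (A : Set S)})
        (TopologicalSpace.induced Subtype.val (zarTopL L)) ↔
      {A : ↥L | FinGenL L (A : Set S)} = Set.univ := by
  let _ : TopologicalSpace L := zarTopL L
  constructor
  · rintro ⟨-, -, hsober, -⟩
    exact eq_univ_of_forall hL.finGenL_of_quasiSober
  · intro h
    refine ⟨hL.compactSpace_finGenSet, finGenSet_t0Space,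
      hL.quasiSober_finGenSet (eq_univ_iff_forall.1 h), range fun x => nhdsKer {x}, ?_, ?_,
      isTopologicalBasis_nhdsKer_singleton isOpen_nhdsKer_finGenSet⟩
    · rintro _ ⟨x, rfl⟩
      exact ⟨isCompact_singleton.nhdsKer, isOpen_nhdsKer_finGenSet x⟩
    · rintro _ ⟨x, rfl⟩ _ ⟨y, rfl⟩
      exact hL.nhdsKer_inter_nhdsKer_mem_range x y
end

section
/- Let M be a module over a commutative ring R. The set f(M) of finitely generated R-submodules of M, viewed inside the spectral space F(M) of all R-submodules of M with the Zariski topology, is dense in F(M) with respect to the constructible topology; moreover, f(M) is a spectral space (in the subspace topology) if and only if M is a Noetherian R-module. -/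
open Set TopologicalSpace

/-- The Zariski topology on the set of `R`-submodules of `M`, generated by the sets
`B(x₁,…,xₙ) = {N | x₁,…,xₙ ∈ N}`. -/
def zarModTop (R M : Type*) [Semiring R] [AddCommMonoid M] [Module R M] :
    TopologicalSpace (Submodule R M) :=
  TopologicalSpace.generateFrom
    {U : Set (Submodule R M) | ∃ F : Set M, F.Finite ∧ U = {N : Submodule R M | F ⊆ (N : Set M)}}

/-- The Zariski topology on the set of ideals of `R`. -/
def zarIdealTop (R : Type*) [CommRing R] : TopologicalSpace (Ideal R) :=
  TopologicalSpace.generateFrom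
    {U : Set (Ideal R) | ∃ F : Set R, F.Finite ∧ U = {I : Ideal R | F ⊆ (I : Set R)}}

/-!
Zariski-open sets of submodules are unions of the sets `Ici K` with `K` finitely generated, and
Zariski-closed sets are down-sets. Hence every patch-open neighbourhood of `N` contains an
interval `Icc K N` with `K` finitely generated, which gives density.

On the finitely generated submodules the subspace topology is the upper-set (Alexandrov)
topology. There quasi-compactness (`univ = Ici ⊥`), `T0` and the basis `Ici a` with
`Ici a ∩ Ici b = Ici (a ⊔ b)` come for free, and sobriety says exactly that every nonempty
directed down-set is principal. If `M` is Noetherian, the supremum of such a set is finitely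
generated, i.e. a compact element of the submodule lattice, so it is attained in the set.
Conversely, the finitely generated submodules of a submodule `N` form such a set, whose
generator must be `N` itself.
-/

open scoped Topology

namespace Topology.IsUpperSet

section Preorder

variable {α : Type*} [TopologicalSpace α] [Preorder α] [Topology.IsUpperSet α]

lemma isOpen_Ici (a : α) : IsOpen (Ici a) :=
  isOpen_iff_isUpperSet.mpr (isUpperSet_Ici a)

lemma isIrreducible_iff {S : Set α} :
    IsIrreducible S ↔ S.Nonempty ∧ DirectedOn (· ≤ ·) S := by
  refine ⟨fun h ↦ ⟨h.nonempty, fun a ha b hb ↦ ?_⟩, fun ⟨hne, hdir⟩ ↦ ⟨hne, ?_⟩⟩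
  · obtain ⟨c, hcS, hac, hbc⟩ := h.isPreirreducible _ _ (isOpen_Ici a) (isOpen_Ici b)
      ⟨a, ha, le_rfl⟩ ⟨b, hb, le_rfl⟩
    exact ⟨c, hcS, hac, hbc⟩
  · rintro u v hu hv ⟨a, haS, hau⟩ ⟨b, hbS, hbv⟩
    obtain ⟨c, hcS, hac, hbc⟩ := hdir a haS b hbS
    exact ⟨c, hcS, isOpen_iff_isUpperSet.mp hu hac hau, isOpen_iff_isUpperSet.mp hv hbc hbv⟩

lemma quasiSober_iff :
    QuasiSober α ↔ ∀ S : Set α, S.Nonempty → DirectedOn (· ≤ ·) S → IsLowerSet S →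
      ∃ a, Iic a = S := by
  simp only [← closure_singleton (α := α), ← isGenericPoint_def]
  refine ⟨fun ⟨h⟩ S hne hdir hlow ↦ h (isIrreducible_iff.mpr ⟨hne, hdir⟩)
    (isClosed_iff_isLower.mpr hlow), fun h ↦ ⟨fun hS hcl ↦ ?_⟩⟩
  rw [isIrreducible_iff] at hS
  exact h _ hS.1 hS.2 (isClosed_iff_isLower.mp hcl)

lemma isCompact_Ici (a : α) : IsCompact (Ici a) :=
  nhdsKer_singleton (α := α) a ▸ isCompact_singleton.nhdsKer

lemma isTopologicalBasis_range_Ici : IsTopologicalBasis (range (Ici : α → Set α)) :=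
  isTopologicalBasis_of_isOpen_of_nhds (by rintro _ ⟨a, rfl⟩; exact isOpen_Ici a)
    fun a _ ha hu ↦
      ⟨Ici a, mem_range_self a, self_mem_Ici, fun _ hb ↦ isOpen_iff_isUpperSet.mp hu hb ha⟩

end Preorder

instance t0Space {α : Type*} [TopologicalSpace α] [PartialOrder α] [Topology.IsUpperSet α] :
    T0Space α :=
  (t0Space_iff_inseparable α).mpr fun _ _ h ↦
    le_antisymm (specializes_iff_le.mp h.specializes') (specializes_iff_le.mp h.specializes)

end Topology.IsUpperSet

theorem isSpectral_upperSet_iff {α : Type*} [SemilatticeSup α] [OrderBot α] :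
    IsSpectral α (Topology.upperSet α) ↔ ∀ S : Set α, S.Nonempty → DirectedOn (· ≤ ·) S →
      IsLowerSet S → ∃ a, Iic a = S := by
  let := Topology.upperSet α
  rw [← Topology.IsUpperSet.quasiSober_iff]
  refine ⟨fun ⟨_, _, h, _⟩ ↦ h, fun h ↦ ⟨?_, inferInstance, h, range Ici, ?_, ?_,
    Topology.IsUpperSet.isTopologicalBasis_range_Ici⟩⟩
  · exact ⟨Ici_bot (α := α) ▸ Topology.IsUpperSet.isCompact_Ici ⊥⟩
  · rintro _ ⟨a, rfl⟩
    exact ⟨Topology.IsUpperSet.isCompact_Ici a, Topology.IsUpperSet.isOpen_Ici a⟩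
  · rintro _ ⟨a, rfl⟩ _ ⟨b, rfl⟩
    exact ⟨a ⊔ b, Ici_inter_Ici.symm⟩

section ZariskiTopology

variable {R M : Type*} [Semiring R] [AddCommMonoid M] [Module R M]

lemma setOf_subset_eq_Ici_span (F : Set M) :
    {N : Submodule R M | F ⊆ N} = Ici (Submodule.span R F) :=
  ext fun _ ↦ Submodule.span_le.symm

lemma isOpen_zarModTop_Ici {K : Submodule R M} (hK : K.FG) : IsOpen[zarModTop R M] (Ici K) := by
  obtain ⟨F, rfl⟩ := hK
  rw [← setOf_subset_eq_Ici_span]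
  exact .basic _ ⟨F, F.finite_toSet, rfl⟩

lemma exists_fg_Ici_subset_of_isOpen_zarModTop {s : Set (Submodule R M)}
    (hs : IsOpen[zarModTop R M] s) {N : Submodule R M} (hN : N ∈ s) :
    ∃ K : Submodule R M, K.FG ∧ K ≤ N ∧ Ici K ⊆ s := by
  induction hs generalizing N with
  | basic u hu =>
    obtain ⟨F, hF, rfl⟩ := hu
    rw [setOf_subset_eq_Ici_span] at hN ⊢
    exact ⟨_, Submodule.fg_span hF, hN, subset_rfl⟩
  | univ => exact ⟨⊥, Submodule.fg_bot, bot_le, subset_univ _⟩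
  | inter u v _ _ ihu ihv =>
    obtain ⟨K₁, hK₁, hK₁N, hK₁u⟩ := ihu hN.1
    obtain ⟨K₂, hK₂, hK₂N, hK₂v⟩ := ihv hN.2
    exact ⟨K₁ ⊔ K₂, hK₁.sup hK₂, sup_le hK₁N hK₂N,
      Ici_inter_Ici.symm.subset.trans (inter_subset_inter hK₁u hK₂v)⟩
  | sUnion T _ ih =>
    obtain ⟨u, hu, hNu⟩ := hN
    obtain ⟨K, hK, hKN, hKu⟩ := ih u hu hNu
    exact ⟨K, hK, hKN, hKu.trans (subset_sUnion_of_mem hu)⟩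

lemma isUpperSet_of_isOpen_zarModTop {s : Set (Submodule R M)} (hs : IsOpen[zarModTop R M] s) :
    IsUpperSet s := fun _ _ hle hN ↦
  have ⟨_, _, hKN, hKs⟩ := exists_fg_Ici_subset_of_isOpen_zarModTop hs hN
  hKs (hKN.trans hle)

lemma exists_fg_Icc_subset_of_isOpen_patchOf {U : Set (Submodule R M)}
    (hU : IsOpen[patchOf (zarModTop R M)] U) {N : Submodule R M} (hN : N ∈ U) :
    ∃ K : Submodule R M, K.FG ∧ K ≤ N ∧ Icc K N ⊆ U := by
  induction hU generalizing N with
  | basic u hu =>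
    rcases hu with ⟨_, hu⟩ | ⟨_, hu⟩
    · obtain ⟨K, hK, hKN, hKu⟩ := exists_fg_Ici_subset_of_isOpen_zarModTop hu hN
      exact ⟨K, hK, hKN, Icc_subset_Ici_self.trans hKu⟩
    · exact ⟨⊥, Submodule.fg_bot, bot_le, fun _ hN' ↦
        isUpperSet_compl.mp (isUpperSet_of_isOpen_zarModTop hu) hN'.2 hN⟩
  | univ => exact ⟨⊥, Submodule.fg_bot, bot_le, subset_univ _⟩
  | inter u v _ _ ihu ihv =>
    obtain ⟨K₁, hK₁, hK₁N, hK₁u⟩ := ihu hN.1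
    obtain ⟨K₂, hK₂, hK₂N, hK₂v⟩ := ihv hN.2
    exact ⟨K₁ ⊔ K₂, hK₁.sup hK₂, sup_le hK₁N hK₂N, fun _ h ↦
      ⟨hK₁u ⟨le_sup_left.trans h.1, h.2⟩, hK₂v ⟨le_sup_right.trans h.1, h.2⟩⟩⟩
  | sUnion T _ ih =>
    obtain ⟨u, hu, hNu⟩ := hN
    obtain ⟨K, hK, hKN, hKu⟩ := ih u hu hNu
    exact ⟨K, hK, hKN, hKu.trans (subset_sUnion_of_mem hu)⟩

theorem dense_setOf_fg_patchOf_zarModTop :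
    @Dense (Submodule R M) (patchOf (zarModTop R M)) {N : Submodule R M | N.FG} := by
  let := patchOf (zarModTop R M)
  refine dense_iff_inter_open.mpr fun U hU ⟨N, hN⟩ ↦ ?_
  obtain ⟨K, hK, hKN, hKU⟩ := exists_fg_Icc_subset_of_isOpen_patchOf hU hN
  exact ⟨K, hKU ⟨le_rfl, hKN⟩, hK⟩

end ZariskiTopology

section FGSubmodules

variable {R M : Type*} [Semiring R] [AddCommMonoid M] [Module R M]

instance : SemilatticeSup {N : Submodule R M | N.FG} :=
  Subtype.semilatticeSup fun _ _ ↦ Submodule.FG.sup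

instance : OrderBot {N : Submodule R M | N.FG} :=
  Subtype.orderBot Submodule.fg_bot

theorem induced_zarModTop_eq_upperSet :
    TopologicalSpace.induced Subtype.val (zarModTop R M) =
      Topology.upperSet {N : Submodule R M | N.FG} := by
  let := zarModTop R M
  ext U
  refine isOpen_induced_iff.trans ⟨?_, fun hU ↦ ⟨⋃ a ∈ U, Ici a.val, ?_, ?_⟩⟩
  · rintro ⟨V, hV, rfl⟩
    exact (isUpperSet_of_isOpen_zarModTop hV).preimage (Subtype.mono_coe _)
  · exact isOpen_biUnion fun a _ ↦ isOpen_zarModTop_Ici a.2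
  · ext b
    simp only [mem_preimage, mem_iUnion, mem_Ici, exists_prop]
    exact ⟨fun ⟨a, ha, hab⟩ ↦ hU hab ha, fun hb ↦ ⟨b, hb, le_rfl⟩⟩

theorem isNoetherian_iff_forall_directedOn_isLowerSet_eq_Iic :
    IsNoetherian R M ↔ ∀ S : Set {N : Submodule R M | N.FG}, S.Nonempty →
      DirectedOn (· ≤ ·) S → IsLowerSet S → ∃ a, Iic a = S := by
  refine ⟨fun h S hne hdir hlow ↦ ?_, fun h ↦ isNoetherian_def.mpr fun N ↦ ?_⟩
  · have hcompact : IsCompactElement (sSup (Subtype.val '' S)) :=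
      (Submodule.fg_iff_compact _).mp (isNoetherian_def.mp h _)
    obtain ⟨_, ⟨c, hcS, rfl⟩, hsup_le⟩ :=
      (CompleteLattice.isCompactElement_iff_le_of_directed_sSup_le _ _).mp hcompact _
        (hne.image _) (directedOn_image.mpr hdir) le_rfl
    exact ⟨c, Subset.antisymm (fun b hb ↦ hlow hb hcS)
      fun b hb ↦ (le_sSup (mem_image_of_mem _ hb)).trans hsup_le⟩
  · obtain ⟨a, ha⟩ := h {b | b.val ≤ N} ⟨⊥, bot_le (a := N)⟩
      (fun b hb c hc ↦
        ⟨b ⊔ c, show b.val ⊔ c.val ≤ N from sup_le hb hc, le_sup_left, le_sup_right⟩)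
      fun _ _ hcb hb ↦ le_trans (α := Submodule R M) hcb hb
    have haN : a.val ≤ N := (ha ▸ self_mem_Iic : a ∈ {b | b.val ≤ N})
    have hNa : N ≤ a.val := fun x hx ↦
      have hspan :
          (⟨_, Submodule.fg_span_singleton x⟩ : {N : Submodule R M | N.FG}) ∈ Iic a :=
        ha ▸ (Submodule.span_singleton_le_iff_mem x N).mpr hx
      hspan (Submodule.mem_span_singleton_self x)
    exact le_antisymm haN hNa ▸ a.2

end FGSubmodules

theorem stmt11 (R M : Type*) [CommRing R] [AddCommGroup M] [Module R M] :
    @Dense (Submodule R M) (patchOf (zarModTop R M)) {N : Submodule R M | N.FG} ∧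
      (IsSpectral (↥{N : Submodule R M | N.FG})
          (TopologicalSpace.induced Subtype.val (zarModTop R M)) ↔
        IsNoetherian R M) := by
  refine ⟨dense_setOf_fg_patchOf_zarModTop, ?_⟩
  rw [induced_zarModTop_eq_upperSet, isSpectral_upperSet_iff,
    isNoetherian_iff_forall_directedOn_isLowerSet_eq_Iic]
end

section
/- Let R be a commutative ring and M a maximal ideal of R. Then M is an isolated point of the space of ideals I(R) endowed with the constructible topology if and only if M is a finitely generated ideal. -/
open Set TopologicalSpace

/-!
A Zariski-open set of ideals is upward closed, and around each of its points `I` it contains a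
basic set `B(F) = [span F, ⊤)` with `F ⊆ I` finite; the complement of a Zariski-open set is downward
closed. Hence every patch-neighbourhood of `M` contains an interval `[J, M]` with `J ≤ M` finitely
generated, and if `{M}` is patch-open then `M = J`. Conversely, if `M = span S` is maximal, then
`{M} = B(S) \ B(1)` is a difference of compact Zariski-open sets.
-/

open Filter Topology

theorem isCompact_of_principal_le_nhds {X : Type*} [TopologicalSpace X] {s : Set X} {a : X}
    (ha : a ∈ s) (h : 𝓟 s ≤ 𝓝 a) : IsCompact s :=
  isCompact_iff_ultrafilter_le_nhds.2 fun _ hf => ⟨a, ha, hf.trans h⟩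

section patchOf

variable {X : Type*} {t : TopologicalSpace X} {s : Set X}

theorem isOpen_patchOf_of_isCompact_of_isOpen (hc : @IsCompact X t s) (ho : IsOpen[t] s) :
    IsOpen[patchOf t] s :=
  isOpen_generateFrom_of_mem (Or.inl ⟨hc, ho⟩)

theorem isOpen_patchOf_compl_of_isCompact_of_isOpen (hc : @IsCompact X t s) (ho : IsOpen[t] s) :
    IsOpen[patchOf t] sᶜ :=
  isOpen_generateFrom_of_mem (Or.inr ⟨by rwa [compl_compl], by rwa [compl_compl]⟩)

end patchOf

section zarIdealTop

variable {R : Type*} [CommRing R]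

theorem isUpperSet_of_isOpen_zarIdealTop {U : Set (Ideal R)} (hU : IsOpen[zarIdealTop R] U) :
    IsUpperSet U := by
  induction hU with
  | basic s hs =>
    obtain ⟨F, -, rfl⟩ := hs
    exact fun _ _ hIJ hI => Subset.trans hI hIJ
  | univ => exact isUpperSet_univ
  | inter s u _ _ hs hu => exact hs.inter hu
  | sUnion S _ hS => exact isUpperSet_sUnion hS

theorem exists_fg_Ici_subset_of_isOpen_zarIdealTop {U : Set (Ideal R)}
    (hU : IsOpen[zarIdealTop R] U) {I : Ideal R} (hI : I ∈ U) :
    ∃ J ≤ I, J.FG ∧ Ici J ⊆ U := by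
  induction hU generalizing I with
  | basic s hs =>
    obtain ⟨F, hF, rfl⟩ := hs
    exact ⟨Ideal.span F, Ideal.span_le.2 hI, Submodule.fg_span hF,
      fun K hK => Ideal.subset_span.trans hK⟩
  | univ => exact ⟨⊥, bot_le, Submodule.fg_bot, subset_univ _⟩
  | inter s u _ _ hs hu =>
    obtain ⟨J₁, hJ₁I, hJ₁, hJ₁s⟩ := hs hI.1
    obtain ⟨J₂, hJ₂I, hJ₂, hJ₂u⟩ := hu hI.2
    exact ⟨J₁ ⊔ J₂, sup_le hJ₁I hJ₂I, Submodule.FG.sup hJ₁ hJ₂, subset_inter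
      ((Ici_subset_Ici.2 le_sup_left).trans hJ₁s) ((Ici_subset_Ici.2 le_sup_right).trans hJ₂u)⟩
  | sUnion S _ hS =>
    obtain ⟨s, hsS, hIs⟩ := hI
    obtain ⟨J, hJI, hJ, hJs⟩ := hS s hsS hIs
    exact ⟨J, hJI, hJ, hJs.trans (subset_sUnion_of_mem hsS)⟩

theorem isOpen_zarIdealTop_Ici_of_fg {J : Ideal R} (hJ : J.FG) :
    IsOpen[zarIdealTop R] (Ici J) := by
  obtain ⟨S, rfl⟩ := hJ
  refine isOpen_generateFrom_of_mem ⟨S, S.finite_toSet, ?_⟩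
  ext I
  exact Ideal.span_le

theorem isCompact_zarIdealTop_Ici (J : Ideal R) : @IsCompact _ (zarIdealTop R) (Ici J) := by
  let _ := zarIdealTop R
  refine isCompact_of_principal_le_nhds (mem_Ici.2 le_rfl) (le_nhds_iff.2 fun U hJU hU => ?_)
  exact (isUpperSet_of_isOpen_zarIdealTop hU).Ici_subset hJU

theorem exists_fg_Icc_subset_of_isOpen_patchOf_zarIdealTop {V : Set (Ideal R)}
    (hV : IsOpen[patchOf (zarIdealTop R)] V) {M : Ideal R} (hM : M ∈ V) :
    ∃ J ≤ M, J.FG ∧ Icc J M ⊆ V := by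
  induction hV generalizing M with
  | basic s hs =>
    rcases hs with ⟨-, hs⟩ | ⟨-, hsc⟩
    · obtain ⟨J, hJM, hJ, hJs⟩ := exists_fg_Ici_subset_of_isOpen_zarIdealTop hs hM
      exact ⟨J, hJM, hJ, Icc_subset_Ici_self.trans hJs⟩
    · have hlower : IsLowerSet s := isUpperSet_compl.1 (isUpperSet_of_isOpen_zarIdealTop hsc)
      exact ⟨⊥, bot_le, Submodule.fg_bot, Icc_subset_Iic_self.trans (hlower.Iic_subset hM)⟩
  | univ => exact ⟨⊥, bot_le, Submodule.fg_bot, subset_univ _⟩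
  | inter s u _ _ hs hu =>
    obtain ⟨J₁, hJ₁M, hJ₁, hJ₁s⟩ := hs hM.1
    obtain ⟨J₂, hJ₂M, hJ₂, hJ₂u⟩ := hu hM.2
    exact ⟨J₁ ⊔ J₂, sup_le hJ₁M hJ₂M, Submodule.FG.sup hJ₁ hJ₂, subset_inter
      ((Icc_subset_Icc_left le_sup_left).trans hJ₁s)
      ((Icc_subset_Icc_left le_sup_right).trans hJ₂u)⟩
  | sUnion S _ hS =>
    obtain ⟨s, hsS, hMs⟩ := hM
    obtain ⟨J, hJM, hJ, hJs⟩ := hS s hsS hMs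
    exact ⟨J, hJM, hJ, hJs.trans (subset_sUnion_of_mem hsS)⟩

end zarIdealTop

theorem stmt12 (R : Type*) [CommRing R] (M : Ideal R) (hM : M.IsMaximal) :
    @IsOpen (Ideal R) (patchOf (zarIdealTop R)) {M} ↔ M.FG := by
  constructor
  · intro hopen
    obtain ⟨J, hJM, hJ, hJV⟩ :=
      exists_fg_Icc_subset_of_isOpen_patchOf_zarIdealTop hopen (mem_singleton M)
    rwa [← show J = M from hJV ⟨le_rfl, hJM⟩]
  · intro hFG
    have hsingleton : ({M} : Set (Ideal R)) = Ici M ∩ (Ici ⊤)ᶜ := by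
      rw [Ici_top, hM.out.Ici_eq, insert_inter_of_notMem (by simp),
        singleton_inter_of_mem hM.ne_top]
    rw [hsingleton]
    let _ := patchOf (zarIdealTop R)
    exact (isOpen_patchOf_of_isCompact_of_isOpen (isCompact_zarIdealTop_Ici M)
      (isOpen_zarIdealTop_Ici_of_fg hFG)).inter
      (isOpen_patchOf_compl_of_isCompact_of_isOpen (isCompact_zarIdealTop_Ici ⊤)
        (isOpen_zarIdealTop_Ici_of_fg ⟨{1}, by simp⟩))
end

section
/- Let R be a Noetherian ring and I an ideal such that R/I is zero-dimensional (Artinian) and every maximal ideal containing I has finite residue field. Then I is an isolated point of the space I(R) of ideals of R, with respect to the constructible topology. -/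
open Set TopologicalSpace

/-!
Every prime of `R ⧸ I` comes from a maximal ideal over `I` and so has finite quotient; as the zero
ideal of the Noetherian ring `R ⧸ I` contains a product of primes, `R ⧸ I` is finite, and only
finitely many ideals contain `I`. For finitely generated `K` the upper set `{J | K ≤ J}` is
quasi-compact open in the Zariski topology, hence clopen in the patch topology, and `{I}` is the
upper set of `I` minus the finitely many upper sets of the ideals strictly above `I`.
-/

namespace Ideal

variable {R : Type*} [CommRing R]

theorem finite_quotient_multiset_prod (s : Multiset (Ideal R)) (hfg : ∀ J ∈ s, J.FG)
    (hfin : ∀ J ∈ s, Finite (R ⧸ J)) : Finite (R ⧸ s.prod) := by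
  induction s using Multiset.induction_on with
  | empty => rw [Multiset.prod_zero, one_eq_top]; infer_instance
  | cons J s ih =>
    rw [Multiset.prod_cons, mul_comm]
    have := hfin J (Multiset.mem_cons_self J s)
    have := ih (fun K hK ↦ hfg K (Multiset.mem_cons_of_mem hK))
      (fun K hK ↦ hfin K (Multiset.mem_cons_of_mem hK))
    exact Submodule.finite_quotient_smul _ (hfg J (Multiset.mem_cons_self J s))

theorem finite_of_forall_isPrime_finite_quotient [IsNoetherianRing R]
    (h : ∀ P : Ideal R, P.IsPrime → Finite (R ⧸ P)) : Finite R := by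
  obtain ⟨Z, hZ⟩ := PrimeSpectrum.exists_primeSpectrum_prod_le R ⊥
  have : Finite (R ⧸ (Z.map PrimeSpectrum.asIdeal).prod) :=
    finite_quotient_multiset_prod _ (fun _ _ ↦ IsNoetherian.noetherian _) fun P hP ↦ by
      obtain ⟨P, -, rfl⟩ := Multiset.mem_map.mp hP
      exact h _ P.2
  rw [le_bot_iff.mp hZ] at this
  exact .of_equiv _ (RingEquiv.quotientBot R).toEquiv

theorem finite_quotient_of_forall_isPrime_le [IsNoetherianRing R] (I : Ideal R)
    (h : ∀ P : Ideal R, P.IsPrime → I ≤ P → Finite (R ⧸ P)) : Finite (R ⧸ I) := by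
  refine finite_of_forall_isPrime_finite_quotient fun P hP ↦ ?_
  have hle : I ≤ P.comap (Quotient.mk I) := fun x hx ↦ by
    simp [Quotient.eq_zero_iff_mem.mpr hx]
  have := h _ (hP.comap _) hle
  exact .of_surjective _ (quotientMap_surjective (H := le_rfl) Quotient.mk_surjective)

theorem finite_setOf_le_of_finite_quotient (I : Ideal R) [Finite (R ⧸ I)] :
    {J : Ideal R | I ≤ J}.Finite := by
  have : {J | comap (Quotient.mk I) ⊥ ≤ J}.Finite :=
    .of_equiv _ (relIsoOfSurjective _ Quotient.mk_surjective).toEquiv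
  simpa [← RingHom.ker_eq_comap_bot] using this

end Ideal

open Topology

section ZariskiTopology

variable {R : Type*} [CommRing R]

theorem upperSet_le_zarIdealTop : Topology.upperSet (Ideal R) ≤ zarIdealTop R :=
  le_generateFrom fun _ ⟨_, _, hU⟩ ↦ hU ▸ fun _ _ hJK hJ ↦ hJ.trans (SetLike.coe_mono hJK)

theorem isOpen_zarIdealTop_setOf_le {K : Ideal R} (hK : K.FG) :
    IsOpen[zarIdealTop R] {J | K ≤ J} := by
  obtain ⟨s, rfl⟩ := hK
  simp only [Submodule.span_le]
  exact .basic _ ⟨s, s.finite_toSet, rfl⟩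

/-- An open set with a least element is the intersection of the neighbourhoods of that element. -/
theorem isCompact_zarIdealTop_setOf_le {K : Ideal R} (hK : K.FG) :
    @IsCompact _ (zarIdealTop R) {J | K ≤ J} := by
  let := zarIdealTop R
  suffices h : {J | K ≤ J} = nhdsKer {K} from h ▸ isCompact_singleton.nhdsKer
  refine (subset_nhdsKer_iff.mpr fun U hU hKU J hJ ↦ ?_).antisymm
    (nhdsKer_minimal (singleton_subset_iff.mpr (le_refl K)) (isOpen_zarIdealTop_setOf_le hK))
  exact upperSet_le_zarIdealTop U hU hJ (hKU rfl)

theorem isClopen_patchOf_setOf_le {K : Ideal R} (hK : K.FG) :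
    @IsClopen _ (patchOf (zarIdealTop R)) {J | K ≤ J} := by
  let := patchOf (zarIdealTop R)
  have h := And.intro (isCompact_zarIdealTop_setOf_le hK) (isOpen_zarIdealTop_setOf_le hK)
  exact ⟨⟨.basic _ (.inr (by simpa only [compl_compl] using h))⟩, .basic _ (.inl h)⟩

theorem isOpen_patchOf_singleton_of_finite_setOf_le [IsNoetherianRing R] {I : Ideal R}
    (hI : {J : Ideal R | I ≤ J}.Finite) : IsOpen[patchOf (zarIdealTop R)] {I} := by
  let := patchOf (zarIdealTop R)
  have hclopen (K : Ideal R) := isClopen_patchOf_setOf_le (IsNoetherian.noetherian K)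
  have : {I} = {J | I ≤ J} \ ⋃ K ∈ {K | I < K}, {J | K ≤ J} := by
    ext J
    simp only [mem_singleton_iff, mem_sdiff, mem_ofPred_eq, mem_iUnion, exists_prop, not_exists,
      not_and]
    constructor
    · rintro rfl
      exact ⟨le_rfl, fun K hK hKI ↦ hK.not_ge hKI⟩
    · rintro ⟨hIJ, hnot⟩
      exact (hIJ.lt_or_eq.resolve_left fun hlt ↦ hnot J hlt le_rfl).symm
  rw [this]
  have hfinite : {K | I < K}.Finite := hI.subset fun (_ : Ideal R) (hK : I < _) ↦ hK.le
  exact (hclopen I).isOpen.sdiff <| hfinite.isClosed_biUnion fun K _ ↦ (hclopen K).isClosed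

end ZariskiTopology

theorem stmt14 (R : Type*) [CommRing R] [IsNoetherianRing R] (I : Ideal R)
    (hdim : ∀ P : Ideal R, P.IsPrime → I ≤ P → P.IsMaximal)
    (hres : ∀ P : Ideal R, P.IsMaximal → I ≤ P → Finite (R ⧸ P)) :
    @IsOpen (Ideal R) (patchOf (zarIdealTop R)) {I} := by
  have : Finite (R ⧸ I) :=
    Ideal.finite_quotient_of_forall_isPrime_le I fun P hP hIP ↦ hres P (hdim P hP hIP) hIP
  exact isOpen_patchOf_singleton_of_finite_setOf_le (Ideal.finite_setOf_le_of_finite_quotient I)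
end

section
/- Let R be a commutative ring. If the set Princ(R) of principal ideals of R is closed in the constructible topology of the ideal space I(R), then R satisfies the ascending chain condition on principal ideals. -/
open Set TopologicalSpace

/-!
An ascending chain of ideals converges to its union in the constructible topology. Indeed, a
basic Zariski open set `{I | F ⊆ I}` with `F` finite that contains the union contains all late
enough members of the chain, while a set whose complement is Zariski open, being a down-set,
contains every member of the chain as soon as it contains the union. Hence if `Princ(R)` is
constructibly closed, the union of an ascending chain of principal ideals is principal, in
particular finitely generated, and such a chain stabilises.
-/

open Filter Topology

theorem Submodule.exists_forall_ge_eq_of_fg_iSup {R M : Type*} [Semiring R] [AddCommMonoid M]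
    [Module R M] {S : ℕ → Submodule R M} (hS : Monotone S) (hfg : (⨆ n, S n).FG) :
    ∃ N, ∀ n, N ≤ n → S n = S N := by
  obtain ⟨_, ⟨N, rfl⟩, hN⟩ :=
    (CompleteLattice.isCompactElement_iff_le_of_directed_sSup_le _ _).mp
      ((Submodule.fg_iff_compact _).mp hfg) (range S) (range_nonempty S)
      hS.directed_le.directedOn_range sSup_range.ge
  exact ⟨N, fun n hn => le_antisymm ((le_iSup S n).trans hN) (hS hn)⟩

section

variable {R : Type*} [CommRing R]

variable {ι : Type*} [Preorder ι] [IsDirected ι (· ≤ ·)] [Nonempty ι] {S : ι → Ideal R}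

theorem tendsto_atTop_iSup_zarIdealTop (hS : Monotone S) :
    Tendsto S atTop (@nhds _ (zarIdealTop R) (⨆ i, S i)) := by
  refine tendsto_nhds_generateFrom_iff.mpr ?_
  rintro _ ⟨F, hF, rfl⟩ hsup
  refine (eventually_all_finite hF).mpr fun x hx => ?_
  obtain ⟨i, hi⟩ := (Submodule.mem_iSup_of_directed S hS.directed_le).mp (hsup hx)
  exact (eventually_ge_atTop i).mono fun j hij => hS hij hi

theorem tendsto_atTop_iSup_patchOf_zarIdealTop (hS : Monotone S) :
    Tendsto S atTop (@nhds _ (patchOf (zarIdealTop R)) (⨆ i, S i)) := by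
  refine tendsto_nhds_generateFrom_iff.mpr ?_
  rintro s (⟨-, hs⟩ | ⟨-, hsc⟩) hsup
  · exact tendsto_atTop_iSup_zarIdealTop hS (@IsOpen.mem_nhds _ (zarIdealTop R) _ _ hs hsup)
  · refine Eventually.of_forall fun i => ?_
    by_contra hi
    exact isUpperSet_of_isOpen_zarIdealTop hsc (le_iSup S i) hi hsup

end

theorem stmt17 (R : Type*) [CommRing R]
    (hcl : @IsClosed (Ideal R) (patchOf (zarIdealTop R))
      {I : Ideal R | Submodule.IsPrincipal I}) :
    ∀ a : ℕ → R, (∀ n, Ideal.span {a n} ≤ Ideal.span {a (n + 1)}) →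
      ∃ N, ∀ n, N ≤ n → Ideal.span {a n} = Ideal.span {a N} := by
  intro a hmono
  have hS : Monotone fun n => Ideal.span {a n} := monotone_nat_of_le_succ hmono
  let := patchOf (zarIdealTop R)
  have hsup : (⨆ n, Ideal.span {a n}).IsPrincipal :=
    hcl.mem_of_tendsto (tendsto_atTop_iSup_patchOf_zarIdealTop hS)
      (Eventually.of_forall fun n => ⟨a n, rfl⟩)
  exact Submodule.exists_forall_ge_eq_of_fg_iSup hS hsup.fg
end

section
/- Let D be an integral domain. Then the closure, in the constructible topology of the space Over(D) of overrings of D, of the set of semilocal Prüfer overrings of D equals the set of integrally closed overrings of D. -/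
open Set TopologicalSpace

/-- The Zariski topology on the space of overrings of `D` (realized as `D`-subalgebras of the
fraction field), with basic open sets `B(F) = {R | F ⊆ R}` for finite `F`. -/
def zarOverTop (D K : Type*) [CommSemiring D] [CommSemiring K] [Algebra D K] :
    TopologicalSpace (Subalgebra D K) :=
  TopologicalSpace.generateFrom
    {U : Set (Subalgebra D K) |
      ∃ F : Set K, F.Finite ∧ U = {R : Subalgebra D K | F ⊆ (R : Set K)}}

/-- A domain is a Prüfer domain iff its localization at every prime ideal is a valuation ring,
i.e. divisibility is total in each such localization. -/
def IsPrufer (R : Type*) [CommRing R] : Prop :=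
  ∀ (P : Ideal R) (hP : P.IsPrime),
    ∀ a b : @Localization.AtPrime R _ P hP, a ∣ b ∨ b ∣ a

/-- A ring is semilocal if it has only finitely many maximal ideals. -/
def IsSemilocal (R : Type*) [CommRing R] : Prop :=
  {M : Ideal R | M.IsMaximal}.Finite

open scoped Topology

/-!
Prüfer domains are integrally closed, their localizations at maximal ideals being valuation rings.
Integral closedness is a patch-closed condition: if `x ∉ R` is a root of a monic polynomial `p` with
coefficients in `R`, then `x` witnesses the failure on the whole patch-open set of overrings that
contain the coefficients of `p` but not `x`.

Conversely, a patch-open set is a union of finite intersections of quasi-compact Zariski-open sets,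
which are upward closed, and of complements of such sets, which are left by avoiding finitely many
elements. So a patch-neighbourhood of an integrally closed `R` contains every overring `A ⊇ R`
avoiding some finite set `G` with `G ∩ R = ∅`. Separating each `g ∈ G` from `R` by a valuation
overring `V_g` gives such an `A = ⋂ V_g`, and a finite intersection `A` of valuation rings is
semilocal and Prüfer: for a prime `P` of `A`, the ring `A_P` is local and is the intersection of the
valuation rings `(V_g)_P`; locality forces one of them to lie in all the others, so `A_P` is a
valuation ring.
-/

theorem isOpen_patchOf {X : Type*} {t : TopologicalSpace X} {s : Set X} (hc : @IsCompact X t s)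
    (ho : IsOpen[t] s) : IsOpen[patchOf t] s :=
  isOpen_generateFrom_of_mem (Or.inl ⟨hc, ho⟩)

theorem isClosed_patchOf {X : Type*} {t : TopologicalSpace X} {s : Set X}
    (hc : @IsCompact X t s) (ho : IsOpen[t] s) : IsClosed[patchOf t] s :=
  letI := patchOf t
  isOpen_compl_iff.mp (isOpen_generateFrom_of_mem (Or.inr (by rw [compl_compl]; exact ⟨hc, ho⟩)))

section Zariski

variable {D K : Type*} [CommSemiring D] [CommSemiring K] [Algebra D K]

attribute [local instance] zarOverTop

theorem isOpen_setOf_subset {F : Set K} (hF : F.Finite) :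
    IsOpen {R : Subalgebra D K | F ⊆ (R : Set K)} :=
  isOpen_generateFrom_of_mem ⟨F, hF, rfl⟩

theorem isTopologicalBasis_zarOverTop :
    IsTopologicalBasis {U : Set (Subalgebra D K) |
      ∃ F : Set K, F.Finite ∧ U = {R : Subalgebra D K | F ⊆ (R : Set K)}} := by
  refine isTopologicalBasis_of_subbasis_of_finiteInter rfl ⟨⟨∅, finite_empty, by simp⟩, ?_⟩
  rintro _ ⟨F, hF, rfl⟩ _ ⟨G, hG, rfl⟩
  exact ⟨F ∪ G, hF.union hG, by ext; simp [union_subset_iff]⟩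

theorem isUpperSet_of_isOpen_zarOverTop {U : Set (Subalgebra D K)} (hU : IsOpen U) :
    IsUpperSet U := by
  intro R R' hRR' hR
  obtain ⟨_, ⟨F, -, rfl⟩, hFR, hFU⟩ := isTopologicalBasis_zarOverTop.exists_subset_of_mem_open hR hU
  exact hFU (hFR.trans (SetLike.coe_subset_coe.mpr hRR'))

theorem isCompact_setOf_subset (F : Set K) : IsCompact {R : Subalgebra D K | F ⊆ (R : Set K)} := by
  refine isCompact_of_finite_subcover fun U hU hcover => ?_
  obtain ⟨i, hi⟩ := mem_iUnion.mp (hcover (Algebra.subset_adjoin : F ⊆ Algebra.adjoin D F))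
  exact ⟨{i}, fun R hR => by
    simpa using isUpperSet_of_isOpen_zarOverTop (hU i) (Algebra.adjoin_le hR) hi⟩

theorem exists_finite_forall_notMem_of_isCompact {W : Set (Subalgebra D K)} (hWc : IsCompact W)
    (hWo : IsOpen W) {R : Subalgebra D K} (hR : R ∉ W) :
    ∃ G : Set K, G.Finite ∧ (∀ g ∈ G, g ∉ R) ∧ ∀ A : Subalgebra D K, (∀ g ∈ G, g ∉ A) → A ∉ W := by
  obtain ⟨G, hGR, hG, hWG⟩ := hWc.elim_finite_subcover_image (b := (R : Set K)ᶜ)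
    (c := fun g => {A : Subalgebra D K | g ∈ A})
    (fun g _ => by simpa using isOpen_setOf_subset (D := D) (finite_singleton g))
    fun A hA => by
      by_contra hAR
      simp only [mem_iUnion, exists_prop, not_exists, not_and, mem_compl_iff] at hAR
      exact hR (isUpperSet_of_isOpen_zarOverTop hWo (fun x hx => by_contra fun h => hAR x h hx) hA)
  exact ⟨G, hG, hGR, fun A hA hAW => by
    obtain ⟨g, hg, hgA⟩ := mem_iUnion₂.mp (hWG hAW)
    exact hA g hg hgA⟩

theorem exists_finite_forall_mem_of_isOpen_patchOf {U : Set (Subalgebra D K)}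
    (hU : IsOpen[patchOf (zarOverTop D K)] U) {R : Subalgebra D K} (hR : R ∈ U) :
    ∃ G : Set K, G.Finite ∧ (∀ g ∈ G, g ∉ R) ∧
      ∀ A : Subalgebra D K, R ≤ A → (∀ g ∈ G, g ∉ A) → A ∈ U := by
  induction hU with
  | basic W hW =>
    rcases hW with ⟨-, hWo⟩ | ⟨hWc, hWo⟩
    · exact ⟨∅, finite_empty, by simp, fun A hRA _ => isUpperSet_of_isOpen_zarOverTop hWo hRA hR⟩
    · obtain ⟨G, hG, hGR, hGW⟩ :=
        exists_finite_forall_notMem_of_isCompact hWc hWo (not_not_intro hR)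
      exact ⟨G, hG, hGR, fun A _ hA => not_not.mp (hGW A hA)⟩
  | univ => exact ⟨∅, finite_empty, by simp, fun _ _ _ => trivial⟩
  | inter U V _ _ ihU ihV =>
    obtain ⟨G, hG, hGR, hU⟩ := ihU hR.1
    obtain ⟨G', hG', hGR', hV⟩ := ihV hR.2
    refine ⟨G ∪ G', hG.union hG', ?_, fun A hRA hGA => ⟨?_, ?_⟩⟩
    · rintro g (hg | hg)
      exacts [hGR g hg, hGR' g hg]
    · exact hU A hRA fun g hg => hGA g (.inl hg)
    · exact hV A hRA fun g hg => hGA g (.inr hg)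
  | sUnion S _ ih =>
    obtain ⟨W, hWS, hRW⟩ := hR
    obtain ⟨G, hG, hGR, hW⟩ := ih W hWS hRW
    exact ⟨G, hG, hGR, fun A hRA hGA => ⟨W, hWS, hW A hRA hGA⟩⟩

end Zariski

theorem subsingleton_setOf_pow_eq {Γ : Type*} [LinearOrderedCommGroupWithZero Γ] {a b : Γ}
    (hb : b ≠ 0) (h : a ≠ 1 ∨ b ≠ 1) : {k : ℕ | a ^ k = b}.Subsingleton := by
  intro m (hm : a ^ m = b) n (hn : a ^ n = b)
  rcases eq_or_ne a 0 with rfl | ha0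
  · have pow_zero_eq {k : ℕ} (hk : (0 : Γ) ^ k = b) : k = 0 := by
      by_contra hk0; exact hb (by rw [← hk, zero_pow hk0])
    rw [pow_zero_eq hm, pow_zero_eq hn]
  rcases eq_or_ne a 1 with rfl | ha1
  · rw [one_pow] at hm; subst hm; simp at h
  exact pow_right_injective₀ (zero_lt_iff.mpr ha0) ha1 (hm.trans hn.symm)

namespace ValuationSubring

variable {K : Type*} [Field K]

theorem one_lt_valuation_iff (V : ValuationSubring K) (x : K) : 1 < V.valuation x ↔ x ∉ V := by
  rw [← V.valuation_le_one_iff, not_le]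

theorem exists_valuation_lt_one_notMem_of_not_le {V W : ValuationSubring K} (hVW : ¬V ≤ W)
    (hWV : ¬W ≤ V) : ∃ y, V.valuation y < 1 ∧ y ∉ W := by
  obtain ⟨a, haW, haV⟩ := SetLike.not_le_iff_exists.mp hWV
  obtain ⟨b, hbV, hbW⟩ := SetLike.not_le_iff_exists.mp hVW
  have ha0 : a ≠ 0 := fun h => haV (h ▸ V.zero_mem)
  refine ⟨b * a⁻¹, ?_, fun hba => hbW ?_⟩
  · rw [map_mul]
    exact mul_lt_one_of_nonneg_of_lt_one_right ((V.valuation_le_one_iff b).mpr hbV) zero_le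
      ((V.mem_nonunits_iff).mp ((V.inv_mem_nonunits_iff).mpr (Or.inr haV)))
  · simpa [ha0] using MulMemClass.mul_mem hba haW

theorem exists_valuation_lt_one_forall_notMem (V : ValuationSubring K)
    (s : Finset (ValuationSubring K)) (hs : ∀ W ∈ s, ¬V ≤ W ∧ ¬W ≤ V) :
    ∃ z, V.valuation z < 1 ∧ ∀ W ∈ s, z ∉ W := by
  classical
  induction s using Finset.induction_on with
  | empty => exact ⟨0, by simp, by simp⟩
  | @insert W₀ t _ ih =>
    obtain ⟨z, hzV, hzt⟩ := ih fun W hW => hs W (Finset.mem_insert_of_mem hW)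
    obtain ⟨y, hyV, hyW₀⟩ := exists_valuation_lt_one_notMem_of_not_le
      (hs W₀ (Finset.mem_insert_self _ _)).1 (hs W₀ (Finset.mem_insert_self _ _)).2
    have hy0 : y ≠ 0 := fun h => hyW₀ (h ▸ W₀.zero_mem)
    -- `z ^ k + y` works as soon as no `W` sees `z ^ k` and `y` with the same valuation
    have hbad : ({0} ∪ ⋃ W ∈ (↑(insert W₀ t) : Set (ValuationSubring K)),
        {k : ℕ | W.valuation z ^ k = W.valuation y}).Finite := by
      refine (Set.finite_singleton 0).union <| (insert W₀ t).finite_toSet.biUnion fun W hW => ?_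
      refine (subsingleton_setOf_pow_eq ((Valuation.ne_zero_iff _).mpr hy0) ?_).finite
      rcases Finset.mem_insert.mp hW with rfl | hWt
      · exact Or.inr ((W.one_lt_valuation_iff y).mpr hyW₀).ne'
      · exact Or.inl ((W.one_lt_valuation_iff z).mpr (hzt W hWt)).ne'
    obtain ⟨k, -, hk⟩ := Set.infinite_univ.exists_notMem_finite hbad
    simp only [Set.mem_union, Set.mem_singleton_iff, Set.mem_iUnion, Set.mem_ofPred_eq,
      Finset.coe_insert, Set.mem_insert_iff, Finset.mem_coe, not_or, not_exists] at hk
    refine ⟨z ^ k + y, ?_, fun W hW hmem => ?_⟩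
    · refine Valuation.map_add_lt _ ?_ hyV
      rw [map_pow]
      exact pow_lt_one₀ zero_le hzV hk.1
    · have hne : W.valuation (z ^ k) ≠ W.valuation y := by
        rw [map_pow]; exact hk.2 W (Finset.mem_insert.mp hW)
      rw [← W.valuation_le_one_iff, Valuation.map_add_of_distinct_val _ hne, max_le_iff,
        map_pow] at hmem
      rcases Finset.mem_insert.mp hW with rfl | hWt
      · exact hyW₀ ((W.valuation_le_one_iff y).mp hmem.2)
      · exact (one_lt_pow₀ ((W.one_lt_valuation_iff z).mpr (hzt W hWt)) hk.1).not_ge hmem.1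

/-- The hypothesis `hW` says that the intersection of the `W i` is a local ring. -/
theorem exists_forall_le_of_inv_mem_or {ι : Type*} [Fintype ι] [Nonempty ι]
    (W : ι → ValuationSubring K)
    (hW : ∀ a, (∀ i, a ∈ W i) → (∀ i, a⁻¹ ∈ W i) ∨ ∀ i, (1 - a)⁻¹ ∈ W i) :
    ∃ i, ∀ j, W i ≤ W j := by
  classical
  obtain ⟨_, ⟨i, rfl⟩, hmin⟩ := (Set.finite_range W).exists_minimal (Set.range_nonempty W)
  refine ⟨i, ?_⟩
  by_contra! ⟨j₀, hj₀⟩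
  let J := Finset.univ.filter fun j => ¬W i ≤ W j
  obtain ⟨z, hzi, hzJ⟩ := exists_valuation_lt_one_forall_notMem (W i) (J.image W) <| by
    simp only [Finset.mem_image, Finset.mem_filter, Finset.mem_univ, true_and, J]
    rintro _ ⟨j, hj, rfl⟩
    exact ⟨hj, fun hji => hj (hmin ⟨j, rfl⟩ hji)⟩
  have hzJ' (j) (hj : ¬W i ≤ W j) : z ∉ W j :=
    hzJ _ (Finset.mem_image_of_mem _ (by simpa [J] using hj))
  have hz0 : z ≠ 0 := fun h => hzJ' j₀ hj₀ (h ▸ (W j₀).zero_mem)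
  have hunit : (W i).valuation (1 + z) = 1 := by
    rw [Valuation.map_add_eq_of_lt_left _ (by rwa [map_one]), map_one]
  -- `a = (1 + z)⁻¹` and `1 - a` lie in every `W j`, but neither is a unit of their intersection
  have ha (j) : (1 + z)⁻¹ ∈ W j := by
    by_cases hj : W i ≤ W j
    · exact hj ((W i).valuation_le_one_iff _ |>.mp (by rw [map_inv₀, hunit, inv_one]))
    · refine ((W j).mem_or_inv_mem (1 + z)).resolve_left fun h => hzJ' j hj ?_
      simpa using sub_mem h (W j).one_mem
  rcases hW _ ha with h | h
  · exact hzJ' j₀ hj₀ (by simpa using sub_mem (h j₀) (W j₀).one_mem)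
  · have h1z : 1 + z ≠ 0 := fun h => by simp [h] at hunit
    have : (1 - (1 + z)⁻¹)⁻¹ = 1 + z⁻¹ := by
      rw [← one_div (1 + z), one_sub_div h1z, add_sub_cancel_left, inv_div, add_div, div_self hz0,
        one_div, add_comm]
    have hzinv : z⁻¹ ∈ W i := by simpa [this] using sub_mem (h i) (W i).one_mem
    refine (((W i).valuation.one_lt_val_iff (inv_ne_zero hz0)).mpr ?_).not_ge
      (((W i).valuation_le_one_iff _).mpr hzinv)
    rwa [inv_inv]

end ValuationSubring

namespace Subring

variable {K : Type*} [CommRing K]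

def localizeBy (B : Subring K) (S : Submonoid K) (hS : S ≤ B.toSubmonoid) : Subring K where
  carrier := {x | ∃ s ∈ S, s * x ∈ B}
  one_mem' := ⟨1, S.one_mem, by simp⟩
  zero_mem' := ⟨1, S.one_mem, by simp⟩
  mul_mem' := by
    rintro x y ⟨s, hs, hsx⟩ ⟨t, ht, hty⟩
    exact ⟨s * t, S.mul_mem hs ht, by rw [mul_mul_mul_comm]; exact B.mul_mem hsx hty⟩
  add_mem' := by
    rintro x y ⟨s, hs, hsx⟩ ⟨t, ht, hty⟩
    refine ⟨s * t, S.mul_mem hs ht, ?_⟩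
    rw [show s * t * (x + y) = t * (s * x) + s * (t * y) by ring]
    exact B.add_mem (B.mul_mem (hS ht) hsx) (B.mul_mem (hS hs) hty)
  neg_mem' := by
    rintro x ⟨s, hs, hsx⟩
    exact ⟨s, hs, by rw [mul_neg]; exact B.neg_mem hsx⟩

variable {B C : Subring K} {S : Submonoid K} {hS : S ≤ B.toSubmonoid}

theorem mem_localizeBy {x : K} : x ∈ B.localizeBy S hS ↔ ∃ s ∈ S, s * x ∈ B := Iff.rfl

theorem le_localizeBy : B ≤ B.localizeBy S hS :=
  fun x hx => ⟨1, S.one_mem, by rwa [one_mul]⟩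

theorem localizeBy_mono (hBC : B ≤ C) {hS' : S ≤ C.toSubmonoid} :
    B.localizeBy S hS ≤ C.localizeBy S hS' :=
  fun _ ⟨s, hs, hsx⟩ => ⟨s, hs, hBC hsx⟩

theorem exists_forall_mul_mem_of_forall_mem_localizeBy {ι : Type*} (s : Finset ι)
    (B : ι → Subring K) (hS : ∀ i ∈ s, S ≤ (B i).toSubmonoid) {x : K}
    (hx : ∀ i (hi : i ∈ s), x ∈ (B i).localizeBy S (hS i hi)) :
    ∃ t ∈ S, ∀ i ∈ s, t * x ∈ B i := by
  classical
  induction s using Finset.induction_on with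
  | empty => exact ⟨1, S.one_mem, by simp⟩
  | @insert i₀ s _ ih =>
    obtain ⟨t, ht, hts⟩ := ih (fun i hi => hS i (Finset.mem_insert_of_mem hi))
      (fun i hi => hx i (Finset.mem_insert_of_mem hi))
    obtain ⟨t₀, ht₀, ht₀x⟩ := hx i₀ (Finset.mem_insert_self _ _)
    refine ⟨t₀ * t, S.mul_mem ht₀ ht, fun i hi => ?_⟩
    rcases Finset.mem_insert.mp hi with rfl | hi
    · rw [mul_right_comm]
      exact (B i).mul_mem ht₀x (hS i (Finset.mem_insert_self _ _) ht)
    · rw [mul_assoc]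
      exact (B i).mul_mem (hS i (Finset.mem_insert_of_mem hi) ht₀) (hts i hi)

end Subring

namespace Subalgebra

variable {D K : Type*} [CommRing D] [Field K] [Algebra D K] (A : Subalgebra D K)

def localizationAtPrime (P : Ideal A) [P.IsPrime] : Subring K :=
  A.toSubring.localizeBy (P.primeCompl.map A.val) (by rintro _ ⟨t, -, rfl⟩; exact t.2)

variable {A} {P : Ideal A} [P.IsPrime]

theorem mem_localizationAtPrime {x : K} :
    x ∈ A.localizationAtPrime P ↔ ∃ t : A, t ∉ P ∧ ↑t * x ∈ A := by
  simp [localizationAtPrime, Subring.mem_localizeBy, Ideal.primeCompl]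

theorem inv_mem_localizationAtPrime_of_mul_mem {t : A} {x : K} (hx : ↑t * x ∈ A)
    (hP : ⟨_, hx⟩ ∉ P) : x⁻¹ ∈ A.localizationAtPrime P := by
  rcases eq_or_ne x 0 with rfl | hx0
  · simp
  exact mem_localizationAtPrime.mpr ⟨_, hP, by simp [hx0]⟩

theorem inv_mem_or_one_sub_inv_mem_localizationAtPrime {a : K}
    (ha : a ∈ A.localizationAtPrime P) :
    a⁻¹ ∈ A.localizationAtPrime P ∨ (1 - a)⁻¹ ∈ A.localizationAtPrime P := by
  obtain ⟨t, htP, hta⟩ := mem_localizationAtPrime.mp ha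
  obtain ⟨t', ht'P, ht'a⟩ := mem_localizationAtPrime.mp (sub_mem (one_mem _) ha)
  by_contra! ⟨h, h'⟩
  have hc : ⟨_, hta⟩ ∈ P := by_contra fun hc => h (inv_mem_localizationAtPrime_of_mul_mem hta hc)
  have hc' : ⟨_, ht'a⟩ ∈ P :=
    by_contra fun hc => h' (inv_mem_localizationAtPrime_of_mul_mem ht'a hc)
  have htt' : t * t' = t' * ⟨_, hta⟩ + t * ⟨_, ht'a⟩ := Subtype.ext (by push_cast; ring)
  have := htt' ▸ P.add_mem (P.mul_mem_left t' hc) (P.mul_mem_left t hc')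
  exact (‹P.IsPrime›.mem_or_mem this).elim htP ht'P

theorem algebraMap_dvd_of_div_mem_localizationAtPrime {r r' : A} (hr : (r : K) ≠ 0)
    (h : (r' : K) / r ∈ A.localizationAtPrime P) :
    algebraMap A (Localization.AtPrime P) r ∣ algebraMap A (Localization.AtPrime P) r' := by
  obtain ⟨t, htP, htx⟩ := mem_localizationAtPrime.mp h
  have htr' : t * r' = ⟨_, htx⟩ * r := Subtype.ext (by simp [hr, mul_div_assoc'])
  rw [← (IsLocalization.map_units (Localization.AtPrime P) (⟨t, htP⟩ : P.primeCompl)).dvd_mul_left,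
    ← map_mul, htr', map_mul]
  exact dvd_mul_left _ _

theorem isPrufer_of_forall_mem_or_inv_mem (h : ∀ (P : Ideal A) [P.IsPrime] (x : K),
    x ∈ A.localizationAtPrime P ∨ x⁻¹ ∈ A.localizationAtPrime P) : IsPrufer A := by
  intro P _ a b
  obtain ⟨⟨ra, sa⟩, hra⟩ := IsLocalization.surj P.primeCompl a
  obtain ⟨⟨rb, sb⟩, hrb⟩ := IsLocalization.surj P.primeCompl b
  have hua := IsLocalization.map_units (Localization.AtPrime P) sa
  have hub := IsLocalization.map_units (Localization.AtPrime P) sb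
  have hab : a ∣ b ↔ algebraMap A (Localization.AtPrime P) ra ∣ algebraMap A _ rb := by
    rw [← hua.mul_right_dvd, ← hub.dvd_mul_right, hra, hrb]
  have hba : b ∣ a ↔ algebraMap A (Localization.AtPrime P) rb ∣ algebraMap A _ ra := by
    rw [← hub.mul_right_dvd, ← hua.dvd_mul_right, hra, hrb]
  rw [hab, hba]
  rcases eq_or_ne (ra : K) 0 with hra0 | hra0
  · rw [show ra = 0 from Subtype.ext hra0, map_zero]
    exact Or.inr (dvd_zero _)
  rcases eq_or_ne (rb : K) 0 with hrb0 | hrb0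
  · rw [show rb = 0 from Subtype.ext hrb0, map_zero]
    exact Or.inl (dvd_zero _)
  refine (h P ((rb : K) / ra)).imp (algebraMap_dvd_of_div_mem_localizationAtPrime hra0) ?_
  rw [inv_div]
  exact algebraMap_dvd_of_div_mem_localizationAtPrime hrb0

end Subalgebra

section FiniteIntersection

variable {D K : Type*} [CommRing D] [Field K] [Algebra D K] {A : Subalgebra D K}
  {s : Finset (ValuationSubring K)}

theorem exists_le_localizationAtPrime_of_forall_mem_iff (hA : ∀ x, x ∈ A ↔ ∀ V ∈ s, x ∈ V)
    (hs : s.Nonempty) (P : Ideal A) [P.IsPrime] :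
    ∃ V ∈ s, V.toSubring ≤ A.localizationAtPrime P := by
  have hAV (V : s) : A.toSubring ≤ V.1.toSubring := fun x hx => (hA x).mp hx V.1 V.2
  have hSV (V) (hV : V ∈ s) : P.primeCompl.map A.val ≤ V.toSubring.toSubmonoid := by
    rintro _ ⟨t, -, rfl⟩
    exact hAV ⟨V, hV⟩ t.2
  let W (V : s) : ValuationSubring K :=
    V.1.ofLE (V.1.toSubring.localizeBy _ (hSV V.1 V.2)) Subring.le_localizeBy
  have hV_W (V : s) : V.1 ≤ W V := fun _ hx => Subring.le_localizeBy (hS := hSV V.1 V.2) hx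
  have hle_W (V : s) : A.localizationAtPrime P ≤ (W V).toSubring :=
    Subring.localizeBy_mono (hAV V) (hS' := hSV V.1 V.2)
  have hW_le (x : K) (hx : ∀ V, x ∈ W V) : x ∈ A.localizationAtPrime P := by
    obtain ⟨_, ⟨t, htP, rfl⟩, htx⟩ := Subring.exists_forall_mul_mem_of_forall_mem_localizeBy s
      (fun V => V.toSubring) hSV fun V hV => hx ⟨V, hV⟩
    exact Subalgebra.mem_localizationAtPrime.mpr ⟨t, htP, (hA _).mpr htx⟩
  have : Nonempty s := hs.to_subtype
  obtain ⟨V, hV⟩ := ValuationSubring.exists_forall_le_of_inv_mem_or W fun a ha =>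
    (Subalgebra.inv_mem_or_one_sub_inv_mem_localizationAtPrime (hW_le a ha)).imp
      (fun h V => hle_W V h) (fun h V => hle_W V h)
  exact ⟨V.1, V.2, fun x hx => hW_le x fun V' => hV V' (hV_W V hx)⟩

theorem isPrufer_of_forall_mem_iff (hA : ∀ x, x ∈ A ↔ ∀ V ∈ s, x ∈ V) (hs : s.Nonempty) :
    IsPrufer A :=
  Subalgebra.isPrufer_of_forall_mem_or_inv_mem fun P _ x =>
    let ⟨V, _, hV⟩ := exists_le_localizationAtPrime_of_forall_mem_iff hA hs P
    (V.mem_or_inv_mem x).imp (@hV x) (@hV x⁻¹)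

theorem isSemilocal_of_forall_mem_iff (hA : ∀ x, x ∈ A ↔ ∀ V ∈ s, x ∈ V) (hs : s.Nonempty) :
    IsSemilocal A := by
  have hAV (V : s) (a : A) : (a : K) ∈ V.1 := (hA a).mp a.2 V.1 V.2
  let center (V : s) : Ideal A :=
    (IsLocalRing.maximalIdeal V.1).comap ((algebraMap A K).codRestrict V.1 (hAV V))
  refine (Set.finite_range center).subset fun M (hM : M.IsMaximal) => ?_
  obtain ⟨V, hVs, hVM⟩ := exists_le_localizationAtPrime_of_forall_mem_iff hA hs M
  refine ⟨⟨V, hVs⟩, (hM.eq_of_le (Ideal.comap_ne_top _ (IsLocalRing.maximalIdeal.isMaximal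
    _).ne_top) fun a ha => ?_).symm⟩
  rw [Ideal.mem_comap, ValuationSubring.valuation_lt_one_iff]
  by_contra hva
  have hv1 : V.valuation a = 1 :=
    le_antisymm ((V.valuation_le_one_iff _).mpr (hAV ⟨V, hVs⟩ a)) (not_lt.mp hva)
  have ha0 : (a : K) ≠ 0 := fun h => by simp [h] at hv1
  obtain ⟨t, htM, hta⟩ := Subalgebra.mem_localizationAtPrime.mp
    (hVM ((V.valuation_le_one_iff _).mp (by rw [map_inv₀, hv1, inv_one])))
  have ht : t = ⟨_, hta⟩ * a := Subtype.ext (by simp [ha0])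
  exact htM (ht ▸ M.mul_mem_left _ ha)

end FiniteIntersection

theorem IsPrufer.isIntegrallyClosed {R : Type*} [CommRing R] [IsDomain R] (h : IsPrufer R) :
    IsIntegrallyClosed R :=
  IsIntegrallyClosed.of_localization_maximal fun P _ _ =>
    have : ValuationRing (Localization.AtPrime P) :=
      ValuationRing.iff_dvd_total.mpr ⟨h P inferInstance⟩
    inferInstance

theorem exists_isPrufer_isSemilocal_of_isIntegrallyClosedIn {D K : Type*} [CommRing D] [Field K]
    [Algebra D K] (R : Subalgebra D K) [IsIntegrallyClosedIn R K] {G : Set K} (hG : G.Finite)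
    (hGR : ∀ g ∈ G, g ∉ R) :
    ∃ T : Subalgebra D K, R ≤ T ∧ (∀ g ∈ G, g ∉ T) ∧ IsPrufer T ∧ IsSemilocal T := by
  classical
  have := hG.fintype
  have : IsIntegrallyClosedIn R.toSubring K := inferInstanceAs (IsIntegrallyClosedIn R K)
  choose V hRV hgV using fun g : G =>
    R.toSubring.exists_le_valuationSubring_of_isIntegrallyClosedIn (hGR g g.2)
  let s := insert ⊤ (Finset.univ.image V)
  have hRs (W) (hW : W ∈ s) : R.toSubring ≤ W.toSubring := by
    rcases Finset.mem_insert.mp hW with rfl | hW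
    · exact fun x _ => ValuationSubring.mem_top x
    · obtain ⟨g, -, rfl⟩ := Finset.mem_image.mp hW
      exact hRV g
  let T : Subalgebra D K :=
    { carrier := {x | ∀ W ∈ s, x ∈ W}
      mul_mem' := fun hx hy W hW => mul_mem (hx W hW) (hy W hW)
      add_mem' := fun hx hy W hW => add_mem (hx W hW) (hy W hW)
      algebraMap_mem' := fun d W hW => hRs W hW (R.algebraMap_mem d) }
  have hT (x) : x ∈ T ↔ ∀ W ∈ s, x ∈ W := Iff.rfl
  refine ⟨T, fun x hx W hW => hRs W hW hx, fun g hg hgT => hgV ⟨g, hg⟩ (hgT _ ?_),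
    isPrufer_of_forall_mem_iff hT (Finset.insert_nonempty _ _),
    isSemilocal_of_forall_mem_iff hT (Finset.insert_nonempty _ _)⟩
  exact Finset.mem_insert_of_mem (Finset.mem_image_of_mem _ (Finset.mem_univ _))

open Polynomial in
theorem Subalgebra.isIntegral_of_coeffs_subset {D K : Type*} [CommRing D] [CommRing K]
    [Algebra D K] {A : Subalgebra D K} {q : K[X]} (hq : q.Monic) (hqA : ↑q.coeffs ⊆ (A : Set K))
    {x : K} (hx : q.eval x = 0) : IsIntegral A x := by
  have hlift : q ∈ lifts (algebraMap A K) := (lifts_iff_coeff_lifts q).mpr fun n => by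
    rcases eq_or_ne (q.coeff n) 0 with h | h
    · exact ⟨0, by simp [h]⟩
    · exact ⟨⟨_, hqA (coeff_mem_coeffs h)⟩, rfl⟩
  obtain ⟨p, hpq, -, hp⟩ := lifts_and_natDegree_eq_and_monic hlift hq
  exact ⟨p, hp, by rw [← eval_map, hpq, hx]⟩

open Polynomial in
theorem isClosed_setOf_isIntegrallyClosed {D K : Type*} [CommRing D] [IsDomain D] [Field K]
    [Algebra D K] [IsFractionRing D K] :
    IsClosed[patchOf (zarOverTop D K)] {R : Subalgebra D K | IsIntegrallyClosed R} := by
  let := patchOf (zarOverTop D K)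
  refine isOpen_compl_iff.mp <|
    isOpen_iff_forall_mem_open.mpr fun R (hR : ¬IsIntegrallyClosed R) => ?_
  obtain ⟨x, ⟨p, hp, hpx⟩, hxR⟩ : ∃ x, IsIntegral R x ∧ x ∉ R := by
    simpa [isIntegrallyClosed_iff K] using hR
  let q := p.map (algebraMap R K)
  refine ⟨{A | ↑q.coeffs ⊆ (A : Set K)} ∩ {A | {x} ⊆ (A : Set K)}ᶜ,
    fun A ⟨hqA, hxA⟩ (hA : IsIntegrallyClosed A) => hxA ?_, ?_, ?_, by simpa using hxR⟩
  · obtain ⟨y, rfl⟩ := (isIntegrallyClosed_iff K).mp hA <|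
      Subalgebra.isIntegral_of_coeffs_subset (hp.map _) hqA (by rw [eval_map]; exact hpx)
    exact singleton_subset_iff.mpr y.2
  · exact (isOpen_patchOf (isCompact_setOf_subset _)
      (isOpen_setOf_subset q.coeffs.finite_toSet)).inter (isClosed_patchOf
        (isCompact_setOf_subset _) (isOpen_setOf_subset (finite_singleton x))).isOpen_compl
  · intro c hc
    obtain ⟨n, -, rfl⟩ := mem_coeffs_iff.mp hc
    simp [q]

theorem stmt18 (D : Type*) [CommRing D] [IsDomain D] :
    @closure (Subalgebra D (FractionRing D)) (patchOf (zarOverTop D (FractionRing D)))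
        {R : Subalgebra D (FractionRing D) | IsPrufer ↥R ∧ IsSemilocal ↥R} =
      {R : Subalgebra D (FractionRing D) | IsIntegrallyClosed ↥R} := by
  let := patchOf (zarOverTop D (FractionRing D))
  refine subset_antisymm (closure_minimal (fun R hR => hR.1.isIntegrallyClosed)
    isClosed_setOf_isIntegrallyClosed) fun R (hR : IsIntegrallyClosed R) => ?_
  have := (isIntegrallyClosed_iff_isIntegrallyClosedIn (FractionRing D)).mp hR
  refine mem_closure_iff.mpr fun U hU hRU => ?_
  obtain ⟨G, hG, hGR, hU⟩ := exists_finite_forall_mem_of_isOpen_patchOf hU hRU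
  obtain ⟨T, hRT, hGT, hT⟩ := exists_isPrufer_isSemilocal_of_isIntegrallyClosedIn R hG hGR
  exact ⟨T, hU T hRT hGT, hT⟩
end
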